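/- arXiv:2206.14731 — 11 statements merged into one kernel-verified Lean document; each statement's English description precedes it below -/
import Mathlib

section
/- Let (N,A) be a pair of Heisenberg type. Then the quotient X = N/Z(N) is an abelian group, the commutator map descends to a well-defined bimultiplicative, alternating and non-degenerate pairing [·,·] : X × X → A, and the map ι : X → Hom(X,A) sending x to the homomorphism [x,·] is a group isomorphism. -/
open scoped commutatorElement


lemma aux_card_hom_le (X A : Type*) [CommGroup X] [Finite X] [Group A] [IsCyclic A] [Finite A] :
    Nat.card (X →* A) ≤ Nat.card X := by
  have hXpos : (Monoid.exponent X) ≠ 0 := Monoid.exponent_ne_zero_of_finite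
  have : NeZero (Monoid.exponent X) := ⟨hXpos⟩
  have : NeZero ((Monoid.exponent X : ℂ)) := ⟨Nat.cast_ne_zero.mpr hXpos⟩
  set m := Nat.card A with hm
  have : NeZero m := ⟨Nat.card_pos.ne'⟩
  have : NeZero ((m : ℂ)) := ⟨Nat.cast_ne_zero.mpr (NeZero.ne m)⟩
  have hcardru : Nat.card (rootsOfUnity m ℂ) = m :=
    HasEnoughRootsOfUnity.natCard_rootsOfUnity ℂ m
  let e : A ≃* rootsOfUnity m ℂ := mulEquivOfCyclicCardEq (hm ▸ hcardru.symm)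
  let j : A →* ℂˣ := (Subgroup.subtype _).comp e.toMonoidHom
  have hj : Function.Injective j :=
    (Subgroup.subtype_injective _).comp e.injective
  have hΦ : Function.Injective (fun f : X →* A => j.comp f) := by
    intro f g h
    ext x
    exact hj (DFunLike.congr_fun h x)
  have hcard : Nat.card (X →* ℂˣ) = Nat.card X :=
    Nat.card_congr (CommGroup.monoidHom_mulEquiv_of_hasEnoughRootsOfUnity X ℂ).some.toEquiv
  have : Finite (X →* ℂˣ) := by
    have : Finite X := inferInstance
    exact Finite.of_equiv X (CommGroup.monoidHom_mulEquiv_of_hasEnoughRootsOfUnity X ℂ).some.toEquiv.symm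
  calc Nat.card (X →* A) ≤ Nat.card (X →* ℂˣ) := Nat.card_le_card_of_injective _ hΦ
    _ = Nat.card X := hcard

/-- For a pair `(N, A)` of Heisenberg type, the quotient `X = N/Z(N)` is abelian,
the commutator descends to a well-defined bimultiplicative, alternating and non-degenerate
pairing `X × X → A`, and `ι : x ↦ [x,·]` is a group isomorphism onto `Hom(X, A)`. -/
theorem stmt_0 (N : Type*) [Group N] (A : Subgroup N)
    (hA : A ≤ Subgroup.center N) (hcyc : IsCyclic A) (hfin : Finite A)
    (hcomm : ∀ x y : N, ⁅x, y⁆ ∈ A)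
    (hX : Finite (N ⧸ Subgroup.center N)) :
    (∀ x y : N ⧸ Subgroup.center N, x * y = y * x) ∧
    ∃ b : (N ⧸ Subgroup.center N) → (N ⧸ Subgroup.center N) → A,
      (∀ x y : N, ((b (QuotientGroup.mk x) (QuotientGroup.mk y) : N) = ⁅x, y⁆)) ∧
      (∀ x y z : N ⧸ Subgroup.center N, b (x * y) z = b x z * b y z) ∧
      (∀ x y z : N ⧸ Subgroup.center N, b x (y * z) = b x y * b x z) ∧
      (∀ x : N ⧸ Subgroup.center N, b x x = 1) ∧
      (∀ x : N ⧸ Subgroup.center N, (∀ y, b x y = 1) → x = 1) ∧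
      (∀ y : N ⧸ Subgroup.center N, (∀ x, b x y = 1) → y = 1) ∧
      Function.Injective b ∧
      (∀ f : (N ⧸ Subgroup.center N) → A, (∀ u v, f (u * v) = f u * f v) → ∃ x, b x = f) := by
  haveI := hcyc; haveI := hfin
  set Z := Subgroup.center N with hZ
  -- commutators with a central factor
  have keyL : ∀ x y z : N, z ∈ Z → ⁅x * z, y⁆ = ⁅x, y⁆ := by
    intro x y z hz
    have h1 : z * y = y * z := (Subgroup.mem_center_iff.mp hz y).symm
    calc ⁅x * z, y⁆ = x * (z * y) * z⁻¹ * x⁻¹ * y⁻¹ := by group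
      _ = x * (y * z) * z⁻¹ * x⁻¹ * y⁻¹ := by rw [h1]
      _ = ⁅x, y⁆ := by group
  have keyR : ∀ x y z : N, z ∈ Z → ⁅x, y * z⁆ = ⁅x, y⁆ := by
    intro x y z hz
    have h1 : z * x⁻¹ = x⁻¹ * z := (Subgroup.mem_center_iff.mp hz x⁻¹).symm
    calc ⁅x, y * z⁆ = x * y * (z * x⁻¹) * z⁻¹ * y⁻¹ := by group
      _ = x * y * (x⁻¹ * z) * z⁻¹ * y⁻¹ := by rw [h1]
      _ = ⁅x, y⁆ := by group
  -- X abelian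
  have habel : ∀ x y : N ⧸ Z, x * y = y * x := by
    intro x y
    induction x using QuotientGroup.induction_on with | H x =>
    induction y using QuotientGroup.induction_on with | H y =>
    rw [← QuotientGroup.mk_mul, ← QuotientGroup.mk_mul]
    rw [QuotientGroup.eq]
    have : (x * y)⁻¹ * (y * x) = ⁅y⁻¹, x⁻¹⁆ := by group
    rw [this]
    exact hA (hcomm y⁻¹ x⁻¹)
  refine ⟨habel, ?_⟩
  -- the pairing
  let f : N → N → A := fun x y => ⟨⁅x, y⁆, hcomm x y⟩
  have hresp : ∀ a₁ b₁ a₂ b₂ : N, (QuotientGroup.leftRel Z) a₁ a₂ →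
      (QuotientGroup.leftRel Z) b₁ b₂ → f a₁ b₁ = f a₂ b₂ := by
    intro a₁ b₁ a₂ b₂ h₁ h₂
    rw [QuotientGroup.leftRel_apply] at h₁ h₂
    have e₁ : a₂ = a₁ * (a₁⁻¹ * a₂) := by group
    have e₂ : b₂ = b₁ * (b₁⁻¹ * b₂) := by group
    apply Subtype.ext
    show ⁅a₁, b₁⁆ = ⁅a₂, b₂⁆
    rw [e₁, e₂, keyR _ _ _ h₂, keyL _ _ _ h₁]
  let b : (N ⧸ Z) → (N ⧸ Z) → A := Quotient.lift₂ f hresp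
  have hb : ∀ x y : N, b (QuotientGroup.mk x) (QuotientGroup.mk y) = f x y := fun _ _ => rfl
  have hbc : ∀ x y : N, ((b (QuotientGroup.mk x) (QuotientGroup.mk y) : A) : N) = ⁅x, y⁆ :=
    fun _ _ => rfl
  -- left multiplicativity
  have hL : ∀ x y z : N ⧸ Z, b (x * y) z = b x z * b y z := by
    intro x y z
    induction x using QuotientGroup.induction_on with | H x =>
    induction y using QuotientGroup.induction_on with | H y =>
    induction z using QuotientGroup.induction_on with | H z =>
    rw [← QuotientGroup.mk_mul]
    apply Subtype.ext
    show ⁅x * y, z⁆ = ⁅x, z⁆ * ⁅y, z⁆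
    have c : ⁅y, z⁆ ∈ Z := hA (hcomm y z)
    have h1 : x * ⁅y, z⁆ = ⁅y, z⁆ * x := Subgroup.mem_center_iff.mp c x
    have h2 : ⁅x, z⁆ * ⁅y, z⁆ = ⁅y, z⁆ * ⁅x, z⁆ := Subgroup.mem_center_iff.mp c ⁅x, z⁆
    calc ⁅x * y, z⁆ = x * ⁅y, z⁆ * (z * x⁻¹ * z⁻¹) := by group
      _ = ⁅y, z⁆ * x * (z * x⁻¹ * z⁻¹) := by rw [h1]
      _ = ⁅y, z⁆ * ⁅x, z⁆ := by group
      _ = ⁅x, z⁆ * ⁅y, z⁆ := h2.symm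
  -- right multiplicativity
  have hR : ∀ x y z : N ⧸ Z, b x (y * z) = b x y * b x z := by
    intro x y z
    induction x using QuotientGroup.induction_on with | H x =>
    induction y using QuotientGroup.induction_on with | H y =>
    induction z using QuotientGroup.induction_on with | H z =>
    rw [← QuotientGroup.mk_mul]
    apply Subtype.ext
    show ⁅x, y * z⁆ = ⁅x, y⁆ * ⁅x, z⁆
    have c : ⁅x, z⁆ ∈ Z := hA (hcomm x z)
    have h1 : y⁻¹ * ⁅x, z⁆ = ⁅x, z⁆ * y⁻¹ := Subgroup.mem_center_iff.mp c y⁻¹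
    calc ⁅x, y * z⁆ = x * y * x⁻¹ * (⁅x, z⁆ * y⁻¹) := by group
      _ = x * y * x⁻¹ * (y⁻¹ * ⁅x, z⁆) := by rw [h1]
      _ = ⁅x, y⁆ * ⁅x, z⁆ := by group
  -- alternating
  have halt : ∀ x : N ⧸ Z, b x x = 1 := by
    intro x
    induction x using QuotientGroup.induction_on with | H x =>
    apply Subtype.ext
    show ⁅x, x⁆ = 1
    group
  -- left nondegeneracy
  have hndL : ∀ x : N ⧸ Z, (∀ y, b x y = 1) → x = 1 := by
    intro x hx
    induction x using QuotientGroup.induction_on with | H x =>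
    rw [QuotientGroup.eq_one_iff]
    rw [Subgroup.mem_center_iff]
    intro g
    have := congrArg (Subtype.val) (hx (QuotientGroup.mk g))
    have h1 : ⁅x, g⁆ = 1 := this
    have : x * g * x⁻¹ * g⁻¹ = 1 := by rw [← commutatorElement_def]; exact h1
    calc g * x = (x * g * x⁻¹ * g⁻¹)⁻¹ * (x * g) := by group
      _ = x * g := by rw [this]; group
  -- right nondegeneracy
  have hndR : ∀ y : N ⧸ Z, (∀ x, b x y = 1) → y = 1 := by
    intro y hy
    induction y using QuotientGroup.induction_on with | H y =>
    rw [QuotientGroup.eq_one_iff]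
    rw [Subgroup.mem_center_iff]
    intro g
    have h1 : ⁅g, y⁆ = 1 := congrArg Subtype.val (hy (QuotientGroup.mk g))
    have : g * y * g⁻¹ * y⁻¹ = 1 := by rw [← commutatorElement_def]; exact h1
    calc g * y = (g * y * g⁻¹ * y⁻¹) * (y * g) := by group
      _ = y * g := by rw [this]; group
  -- b 1 y = 1
  have hone : ∀ y : N ⧸ Z, b 1 y = 1 := by
    intro y
    have := hL 1 1 y
    rw [one_mul] at this
    exact left_eq_mul.mp this
  -- injectivity of b
  have hinj : Function.Injective b := by
    intro x x' h
    have hxy : ∀ y, b (x * x'⁻¹) y = 1 := by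
      intro y
      have h1 : b x y = b x' y := by rw [h]
      have h2 : b (x' * x'⁻¹) y = b x' y * b x'⁻¹ y := hL x' x'⁻¹ y
      rw [mul_inv_cancel] at h2
      rw [hone y] at h2
      have h3 : b x'⁻¹ y = (b x' y)⁻¹ := (inv_eq_of_mul_eq_one_right h2.symm).symm
      rw [hL x x'⁻¹ y, h3, h1, mul_inv_cancel]
    have := hndL _ hxy
    have : x = x' := by
      have h4 : x * x'⁻¹ = 1 := this
      calc x = x * x'⁻¹ * x' := by group
        _ = x' := by rw [h4]; group
    exact this
  refine ⟨b, hbc, hL, hR, halt, hndL, hndR, hinj, ?_⟩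
  -- surjectivity onto homomorphisms
  intro f hf
  letI : CommGroup (N ⧸ Z) := { (inferInstance : Group (N ⧸ Z)) with mul_comm := habel }
  let F : (N ⧸ Z) →* A := MonoidHom.mk' f hf
  let ι : (N ⧸ Z) → ((N ⧸ Z) →* A) := fun x => MonoidHom.mk' (b x) (hR x)
  have hιinj : Function.Injective ι := by
    intro x x' h
    apply hinj
    funext y
    exact DFunLike.congr_fun h y
  have hfinH : Finite ((N ⧸ Z) →* A) :=
    Finite.of_injective (fun g => (g : (N ⧸ Z) → A)) DFunLike.coe_injective
  have hcard₁ : Nat.card (N ⧸ Z) ≤ Nat.card ((N ⧸ Z) →* A) :=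
    Nat.card_le_card_of_injective ι hιinj
  have hcard₂ : Nat.card ((N ⧸ Z) →* A) ≤ Nat.card (N ⧸ Z) :=
    aux_card_hom_le (N ⧸ Z) A
  have hbij : Function.Bijective ι :=
    (Nat.bijective_iff_injective_and_card ι).mpr ⟨hιinj, le_antisymm hcard₁ hcard₂⟩
  obtain ⟨x, hx⟩ := hbij.2 F
  exact ⟨x, funext fun y => DFunLike.congr_fun hx y⟩
end

section
/- Let (N,A) be a pair of Heisenberg type, let X = N/Z(N), and let ι : X → Hom(X,A) be the isomorphism induced by the commutator, ι(x) = [x,·]. Let L be a subgroup of N containing Z(N). Then the image of L/Z(N) under ι is exactly the annihilator of Z_N(L)/Z(N) in Hom(X,A), i.e. the subgroup of homomorphisms X → A that are trivial on Z_N(L)/Z(N). In particular the indices satisfy [L : Z(N)] = [N : Z_N(L)], and the double centralizer satisfies Z_N(Z_N(L)) = L. -/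
open scoped commutatorElement


lemma aux_card_hom (G B : Type*) [CommGroup G] [Finite G] [CommGroup B] [Finite B]
    [IsCyclic B] (hexp : ∀ g : G, g ^ Nat.card B = 1) :
    Nat.card (G →* B) = Nat.card G := by
  haveI : NeZero (Nat.card B) := ⟨Nat.card_pos.ne'⟩
  haveI : IsCyclic Bˣ := isCyclic_of_surjective (toUnits (G := B)) (MulEquiv.surjective _)
  haveI : HasEnoughRootsOfUnity B (Nat.card B) := by
    constructor
    · obtain ⟨g, hg⟩ := IsCyclic.exists_generator (α := B)
      exact ⟨g, orderOf_eq_card_of_forall_mem_zpowers hg ▸ IsPrimitiveRoot.orderOf g⟩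
    · infer_instance
  have hdvd : Monoid.exponent G ∣ Nat.card B := Monoid.exponent_dvd_of_forall_pow_eq_one hexp
  haveI : HasEnoughRootsOfUnity B (Monoid.exponent G) := HasEnoughRootsOfUnity.of_dvd B hdvd
  obtain ⟨e⟩ := CommGroup.monoidHom_mulEquiv_of_hasEnoughRootsOfUnity G B
  have e2 : (G →* B) ≃* (G →* Bˣ) := MulEquiv.monoidHomCongrRight toUnits
  rw [Nat.card_congr (e2.toEquiv.trans e.toEquiv)]

lemma aux_subgroup_eq_of_le_of_card_le {X : Type*} [Group X] [Finite X] {H K : Subgroup X}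
    (h : H ≤ K) (hc : Nat.card K ≤ Nat.card H) : H = K :=
  SetLike.coe_injective (Set.eq_of_subset_of_ncard_le h
    (by rwa [← Nat.card_coe_set_eq, ← Nat.card_coe_set_eq]) (Set.toFinite _))

def auxPerp {X B : Type*} [CommGroup X] [CommGroup B] (ι : X →* (X →* B)) (Y : Subgroup X) :
    Subgroup X where
  carrier := {x | ∀ y ∈ Y, ι x y = 1}
  one_mem' := by intro y hy; simp
  mul_mem' := by
    intro a b ha hb y hy
    rw [map_mul, MonoidHom.mul_apply, ha y hy, hb y hy, mul_one]
  inv_mem' := by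
    intro a ha y hy
    rw [map_inv, MonoidHom.inv_apply, ha y hy, inv_one]

lemma aux_mem_perp {X B : Type*} [CommGroup X] [CommGroup B] (ι : X →* (X →* B))
    (Y : Subgroup X) (x : X) : x ∈ auxPerp ι Y ↔ ∀ y ∈ Y, ι x y = 1 := Iff.rfl

lemma aux_card_mul_card_perp {X B : Type*} [CommGroup X] [Finite X] [CommGroup B] [Finite B]
    [IsCyclic B] (hexp : ∀ g : X, g ^ Nat.card B = 1)
    (ι : X →* (X →* B)) (hbij : Function.Bijective ι) (Y : Subgroup X) :
    Nat.card Y * Nat.card (auxPerp ι Y) = Nat.card X := by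
  have e1 : auxPerp ι Y ≃ {f : X →* B // ∀ y ∈ Y, f y = 1} := by
    refine Equiv.ofBijective (fun x => ⟨ι x, x.2⟩) ⟨?_, ?_⟩
    · intro a b h
      exact Subtype.ext (hbij.1 (congrArg Subtype.val h))
    · rintro ⟨f, hf⟩
      obtain ⟨x, hx⟩ := hbij.2 f
      exact ⟨⟨x, fun y hy => by rw [hx]; exact hf y hy⟩, Subtype.ext hx⟩
  have e2 : {f : X →* B // ∀ y ∈ Y, f y = 1} ≃ ((X ⧸ Y) →* B) :=
    { toFun := fun f => QuotientGroup.lift Y f.1 (fun y hy => f.2 y hy)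
      invFun := fun g => ⟨g.comp (QuotientGroup.mk' Y), fun y hy => by
        simp only [MonoidHom.comp_apply, QuotientGroup.mk'_apply]
        rw [(QuotientGroup.eq_one_iff y).mpr hy, map_one]⟩
      left_inv := fun f => Subtype.ext (MonoidHom.ext fun x => rfl)
      right_inv := fun g => MonoidHom.ext fun q => QuotientGroup.induction_on q fun x => rfl }
  have hexpQ : ∀ q : X ⧸ Y, q ^ Nat.card B = 1 := fun q =>
    QuotientGroup.induction_on q fun x => by
      rw [← QuotientGroup.mk_pow, hexp x, QuotientGroup.mk_one]
  have hc : Nat.card (auxPerp ι Y) = Nat.card (X ⧸ Y) := by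
    rw [Nat.card_congr (e1.trans e2), aux_card_hom _ B hexpQ]
  rw [hc, mul_comm, ← Subgroup.card_eq_card_quotient_mul_card_subgroup]

lemma aux_perp_perp {X B : Type*} [CommGroup X] [Finite X] [CommGroup B] [Finite B]
    [IsCyclic B] (hexp : ∀ g : X, g ^ Nat.card B = 1)
    (ι : X →* (X →* B)) (hbij : Function.Bijective ι)
    (hanti : ∀ a b : X, ι a b * ι b a = 1) (Y : Subgroup X) :
    auxPerp ι (auxPerp ι Y) = Y := by
  have hle : Y ≤ auxPerp ι (auxPerp ι Y) := by
    intro y hy z hz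
    have h := hanti y z
    rwa [hz y hy, mul_one] at h
  have h1 := aux_card_mul_card_perp hexp ι hbij Y
  have h2 := aux_card_mul_card_perp hexp ι hbij (auxPerp ι Y)
  have hpos : 0 < Nat.card (auxPerp ι Y) := Nat.card_pos
  have hcard : Nat.card (auxPerp ι (auxPerp ι Y)) = Nat.card Y := by
    apply Nat.eq_of_mul_eq_mul_left hpos
    rw [h2, ← h1, mul_comm]
  exact (aux_subgroup_eq_of_le_of_card_le hle hcard.le).symm


/-- For a Heisenberg pair `(N, A)` and a subgroup `L` with `Z(N) ≤ L`, the image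
of `L/Z(N)` under the commutator-induced isomorphism `ι : N/Z(N) → Hom(N/Z(N), A)` equals the
annihilator of `Z_N(L)/Z(N)`; in particular `[L : Z(N)] = [N : Z_N(L)]` and
`Z_N(Z_N(L)) = L`. -/
theorem stmt_1 (N : Type*) [Group N] (A : Subgroup N)
    (hA : A ≤ Subgroup.center N) (hcyc : IsCyclic A) (hfin : Finite A)
    (hcomm : ∀ x y : N, ⁅x, y⁆ ∈ A)
    (hX : Finite (N ⧸ Subgroup.center N))
    (L : Subgroup N) (hZL : Subgroup.center N ≤ L) :
    (∀ f : (N ⧸ Subgroup.center N) → A, (∀ u v, f (u * v) = f u * f v) →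
      ((∃ x ∈ L, ∀ y : N, ((f (QuotientGroup.mk y) : N) = ⁅x, y⁆)) ↔
        ∀ z ∈ Subgroup.centralizer (L : Set N), f (QuotientGroup.mk z) = 1)) ∧
    (Subgroup.center N).relIndex L = (Subgroup.centralizer (L : Set N)).index ∧
    Subgroup.centralizer ((Subgroup.centralizer (L : Set N) : Subgroup N) : Set N) = L := by
  haveI := hcyc
  haveI := hfin
  haveI := hX
  set Z := Subgroup.center N with hZdef
  have hcentral : ∀ c ∈ A, ∀ w : N, w * c = c * w := fun c hc w =>
    Subgroup.mem_center_iff.mp (hA hc) w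
  have key2 : ∀ x y z : N, ⁅x, y * z⁆ = ⁅x, y⁆ * ⁅x, z⁆ := by
    intro x y z
    have h1 : ⁅x, y * z⁆ = ⁅x, y⁆ * (y * ⁅x, z⁆ * y⁻¹) := by group
    have h2 : y * ⁅x, z⁆ * y⁻¹ = ⁅x, z⁆ := by rw [hcentral _ (hcomm x z) y]; group
    rw [h1, h2]
  have key1 : ∀ x w y : N, ⁅x * w, y⁆ = ⁅x, y⁆ * ⁅w, y⁆ := by
    intro x w y
    have h1 : ⁅x * w, y⁆ = (x * ⁅w, y⁆ * x⁻¹) * ⁅x, y⁆ := by group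
    have h2 : x * ⁅w, y⁆ * x⁻¹ = ⁅w, y⁆ := by rw [hcentral _ (hcomm w y) x]; group
    rw [h1, h2]
    exact hcentral _ (hcomm x y) _
  letI instA : CommGroup A :=
    { (inferInstance : Group A) with
      mul_comm := fun a b => Subtype.ext (hcentral _ b.2 _) }
  letI instX : CommGroup (N ⧸ Z) :=
    { (inferInstance : Group (N ⧸ Z)) with
      mul_comm := by
        intro a b
        obtain ⟨x, rfl⟩ := QuotientGroup.mk_surjective a
        obtain ⟨y, rfl⟩ := QuotientGroup.mk_surjective b
        rw [← QuotientGroup.mk_mul, ← QuotientGroup.mk_mul]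
        apply QuotientGroup.eq.mpr
        have h : (x * y)⁻¹ * (y * x) = ⁅y⁻¹, x⁻¹⁆ := by group
        rw [h]
        exact hA (hcomm _ _) }
  set n := Nat.card A with hndef
  have hpowA : ∀ c ∈ A, c ^ n = 1 := by
    intro c hc
    have h : ((⟨c, hc⟩ : A) ^ n : A) = 1 := pow_card_eq_one'
    exact congrArg Subtype.val h
  have hcommpow : ∀ x y : N, ∀ k : ℕ, ⁅x ^ k, y⁆ = ⁅x, y⁆ ^ k := by
    intro x y k
    induction k with
    | zero => simp
    | succ k ih => rw [pow_succ, key1, ih, pow_succ]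
  have hZpow : ∀ x : N, x ^ n ∈ Z := by
    intro x
    rw [hZdef, Subgroup.mem_center_iff]
    intro g
    have h1 : ⁅x ^ n, g⁆ = 1 := by rw [hcommpow]; exact hpowA _ (hcomm x g)
    exact (commutatorElement_eq_one_iff_mul_comm.mp h1).symm
  -- the commutator pairing
  have hφz : ∀ x z : N, z ∈ Z → (⟨⁅x, z⁆, hcomm x z⟩ : A) = 1 := by
    intro x z hz
    exact Subtype.ext (commutatorElement_eq_one_iff_mul_comm.mpr
      (Subgroup.mem_center_iff.mp hz x))
  let φ : N → ((N ⧸ Z) →* A) := fun x =>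
    QuotientGroup.lift Z
      (MonoidHom.mk' (fun y => (⟨⁅x, y⁆, hcomm x y⟩ : A)) (fun y z => Subtype.ext (key2 x y z)))
      (fun z hz => hφz x z hz)
  let Φ : N →* ((N ⧸ Z) →* A) :=
    MonoidHom.mk' φ (fun x w => MonoidHom.ext fun q =>
      QuotientGroup.induction_on q fun y => Subtype.ext (key1 x w y))
  let ι : (N ⧸ Z) →* ((N ⧸ Z) →* A) :=
    QuotientGroup.lift Z Φ (fun z hz => MonoidHom.ext fun q =>
      QuotientGroup.induction_on q fun y => Subtype.ext
        (commutatorElement_eq_one_iff_mul_comm.mpr (Subgroup.mem_center_iff.mp hz y).symm))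
  have hι : ∀ x y : N, ι (QuotientGroup.mk x) (QuotientGroup.mk y) = ⟨⁅x, y⁆, hcomm x y⟩ :=
    fun x y => rfl
  have hXexp : ∀ g : N ⧸ Z, g ^ n = 1 := by
    intro g
    refine QuotientGroup.induction_on g fun x => ?_
    rw [← QuotientGroup.mk_pow]
    exact (QuotientGroup.eq_one_iff _).mpr (hZpow x)
  haveI : Finite ((N ⧸ Z) →* A) :=
    Finite.of_injective (fun f => (f : (N ⧸ Z) → A)) DFunLike.coe_injective
  have hcardhom : Nat.card ((N ⧸ Z) →* A) = Nat.card (N ⧸ Z) := aux_card_hom _ A hXexp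
  have hinj : Function.Injective ι := by
    rw [injective_iff_map_eq_one]
    intro a ha
    obtain ⟨x, rfl⟩ := QuotientGroup.mk_surjective a
    rw [QuotientGroup.eq_one_iff]
    rw [hZdef, Subgroup.mem_center_iff]
    intro g
    have h1 : ι (QuotientGroup.mk x) (QuotientGroup.mk g) = 1 := by rw [ha]; rfl
    have h2 : ⁅x, g⁆ = 1 := congrArg Subtype.val h1
    exact (commutatorElement_eq_one_iff_mul_comm.mp h2).symm
  have hbij : Function.Bijective ι :=
    (Nat.bijective_iff_injective_and_card ι).mpr ⟨hinj, hcardhom.symm⟩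
  have hanti : ∀ a b : N ⧸ Z, ι a b * ι b a = 1 := by
    intro a b
    refine QuotientGroup.induction_on a fun x => QuotientGroup.induction_on b fun y => ?_
    refine Subtype.ext ?_
    show ⁅x, y⁆ * ⁅y, x⁆ = 1
    rw [← commutatorElement_inv, inv_mul_cancel]
  set q := QuotientGroup.mk' Z with hqdef
  have hq : Function.Surjective q := QuotientGroup.mk'_surjective Z
  set Lb := Subgroup.map q L with hLb
  set K := Subgroup.centralizer (L : Set N) with hK
  set Kb := Subgroup.map q K with hKb
  have hZK : Z ≤ K := Subgroup.center_le_centralizer _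
  have hcomapL : Subgroup.comap q Lb = L := by
    rw [hLb, Subgroup.comap_map_eq, QuotientGroup.ker_mk']
    exact sup_eq_left.mpr hZL
  have hcomapK : Subgroup.comap q Kb = K := by
    rw [hKb, Subgroup.comap_map_eq, QuotientGroup.ker_mk']
    exact sup_eq_left.mpr hZK
  have hperp : ∀ M : Subgroup N,
      Subgroup.comap q (auxPerp ι (Subgroup.map q M)) = Subgroup.centralizer (M : Set N) := by
    intro M
    ext x
    rw [Subgroup.mem_comap, aux_mem_perp, Subgroup.mem_centralizer_iff]
    constructor
    · intro h y hy
      have h1 := h (q y) (Subgroup.mem_map_of_mem q hy)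
      have h2 : ⁅x, y⁆ = 1 := congrArg Subtype.val h1
      exact (commutatorElement_eq_one_iff_mul_comm.mp h2).symm
    · intro h yb hyb
      rw [Subgroup.mem_map] at hyb
      obtain ⟨y, hy, rfl⟩ := hyb
      exact Subtype.ext (commutatorElement_eq_one_iff_mul_comm.mpr (h y hy).symm)
  have hPL : auxPerp ι Lb = Kb := by
    apply Subgroup.comap_injective hq
    rw [hperp L, hcomapK, hK]
  have hPK : auxPerp ι Kb = Lb := by
    rw [← hPL, aux_perp_perp hXexp ι hbij hanti]
  have hcent2 : Subgroup.centralizer ((K : Subgroup N) : Set N) = L := by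
    have h3 := hperp K
    rw [← hKb, hPK, hcomapL] at h3
    exact h3.symm
  refine ⟨?_, ?_, hcent2⟩
  · -- part 1
    intro f hf
    constructor
    · rintro ⟨x, hxL, hfx⟩ z hz
      refine Subtype.ext ?_
      rw [hfx z]
      exact commutatorElement_eq_one_iff_mul_comm.mpr
        (Subgroup.mem_centralizer_iff.mp hz x hxL)
    · intro h
      set F : (N ⧸ Z) →* A := MonoidHom.mk' f hf with hF
      have hFK : ∀ yb ∈ Kb, F yb = 1 := by
        intro yb hyb
        rw [Subgroup.mem_map] at hyb
        obtain ⟨y, hy, rfl⟩ := hyb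
        exact h y hy
      obtain ⟨w, hw⟩ := hbij.2 F
      have hwP : w ∈ auxPerp ι Kb := by
        rw [aux_mem_perp]
        intro yb hyb
        rw [hw]
        exact hFK yb hyb
      rw [hPK, hLb, Subgroup.mem_map] at hwP
      obtain ⟨x, hxL, rfl⟩ := hwP
      refine ⟨x, hxL, fun y => ?_⟩
      have h1 : F (QuotientGroup.mk y) = ι (q x) (QuotientGroup.mk y) := by rw [hw]
      have h2 : (F (QuotientGroup.mk y) : N) = ⁅x, y⁆ := by
        rw [h1]
        rfl
      exact h2
  · -- part 2 : relindex
    have hcardX := aux_card_mul_card_perp hXexp ι hbij Lb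
    rw [hPL] at hcardX
    have hidx : K.index = Kb.index := by
      rw [← hcomapK]
      exact Subgroup.index_comap_of_surjective _ hq
    have hKbpos : 0 < Nat.card Kb := Nat.card_pos
    have hidx2 : Kb.index * Nat.card Kb = Nat.card (N ⧸ Z) := Subgroup.index_mul_card Kb
    have hKbindex : Kb.index = Nat.card Lb := by
      apply Nat.eq_of_mul_eq_mul_right hKbpos
      rw [hidx2, ← hcardX]
    have hrel : Z.relIndex L = Nat.card Lb := by
      have hker : (q.comp L.subtype).ker = Z.subgroupOf L := by
        ext x
        simp only [MonoidHom.mem_ker, MonoidHom.comp_apply, Subgroup.mem_subgroupOf,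
          Subgroup.coe_subtype, hqdef, QuotientGroup.mk'_apply, QuotientGroup.eq_one_iff]
      have hrange : (q.comp L.subtype).range = Lb := by
        rw [MonoidHom.range_comp, Subgroup.range_subtype]
      have e := QuotientGroup.quotientKerEquivRange (q.comp L.subtype)
      rw [Subgroup.relIndex, Subgroup.index, ← hker, ← hrange]
      exact Nat.card_congr e.toEquiv
    rw [hrel, hidx, hKbindex]
end

section
/- Let (N,A) be a pair of Heisenberg type, let L be an abelian subgroup of N containing Z(N), and let χ be a genuine character of L. Then the conjugation action (for n ∈ N and a character θ of L, (n·θ)(x) = θ(n⁻¹ x n), which is well defined since L is normal in N) induces a simply transitive action of the group N/Z_N(L) on the set of characters θ of L whose restriction to Z(N) equals the restriction of χ to Z(N). -/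
lemma charEquiv (V : Type*) [CommGroup V] [Finite V] : Nonempty ((V →* ℂˣ) ≃* V) := by
  have h0 : (Monoid.exponent V) ≠ 0 := Monoid.exponent_ne_zero_of_finite
  haveI : NeZero ((Monoid.exponent V : ℂ)) := ⟨by exact_mod_cast h0⟩
  exact CommGroup.monoidHom_mulEquiv_of_hasEnoughRootsOfUnity V ℂ

lemma charFinite (V : Type*) [CommGroup V] [Finite V] : Finite (V →* ℂˣ) :=
  Finite.of_equiv V (charEquiv V).some.toEquiv.symm

lemma charCard (V : Type*) [CommGroup V] [Finite V] : Nat.card (V →* ℂˣ) = Nat.card V :=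
  Nat.card_congr (charEquiv V).some.toEquiv

lemma resSurj (V : Type*) [CommGroup V] [Finite V] (W : Subgroup V) :
    Function.Surjective (fun φ : V →* ℂˣ => φ.comp W.subtype) := by
  classical
  let res : (V →* ℂˣ) →* (W →* ℂˣ) := MonoidHom.mk' (fun φ => φ.comp W.subtype) (fun a b => rfl)
  haveI : Finite (V →* ℂˣ) := charFinite V
  haveI : Finite (W →* ℂˣ) := charFinite W
  have e : ((V ⧸ W) →* ℂˣ) ≃ res.ker :=
    { toFun := fun ψ => ⟨ψ.comp (QuotientGroup.mk' W), by
        rw [MonoidHom.mem_ker]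
        refine MonoidHom.ext fun w => ?_
        show ψ (QuotientGroup.mk' W (w : V)) = 1
        rw [QuotientGroup.mk'_apply, (QuotientGroup.eq_one_iff _).mpr w.2, map_one]⟩
      invFun := fun φ => QuotientGroup.lift W φ.1 (fun w hw => by
        have := DFunLike.congr_fun (MonoidHom.mem_ker.mp φ.2) (⟨w, hw⟩ : W)
        exact this)
      left_inv := fun ψ => by
        ext q
        simp
        rfl
      right_inv := fun φ => by
        apply Subtype.ext
        ext x
        simp
        rfl }
  have hker : Nat.card res.ker = Nat.card (V ⧸ W) := by
    rw [← Nat.card_congr e, charCard]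
  have h1 : Nat.card (V →* ℂˣ) = Nat.card res.range * Nat.card res.ker := by
    rw [Subgroup.card_eq_card_quotient_mul_card_subgroup res.ker,
      Nat.card_congr (QuotientGroup.quotientKerEquivRange res).toEquiv]
  have h2 : Nat.card V = Nat.card (V ⧸ W) * Nat.card W :=
    Subgroup.card_eq_card_quotient_mul_card_subgroup W
  have hq : 0 < Nat.card (V ⧸ W) := Nat.card_pos
  have h3 : Nat.card res.range = Nat.card (W →* ℂˣ) := by
    rw [charCard W]
    have := h1
    rw [charCard V, hker, h2] at this
    -- this : Nat.card (V⧸W) * Nat.card W = Nat.card res.range * Nat.card (V⧸W)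
    have := Nat.eq_of_mul_eq_mul_left hq (by linarith [this] : Nat.card (V ⧸ W) * Nat.card W = Nat.card (V ⧸ W) * Nat.card res.range)
    omega
  have htop : res.range = ⊤ := Subgroup.eq_top_of_card_eq _ h3
  intro δ
  have : δ ∈ res.range := htop ▸ Subgroup.mem_top δ
  obtain ⟨φ, hφ⟩ := this
  exact ⟨φ, hφ⟩

open scoped commutatorElement

/-- For a Heisenberg pair `(N, A)`, an abelian subgroup `L` containing `Z(N)`
(hence normal) and a genuine character `χ` of `L`, the conjugation action
`(n·θ)(x) = θ(n⁻¹ x n)` induces a simply transitive action of `N/Z_N(L)` on the set of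
characters of `L` whose restriction to `Z(N)` equals that of `χ`:
the action preserves the set, it is transitive on it, and the stabilizer of each point is
exactly `Z_N(L)`. -/
theorem stmt_3 (N : Type*) [Group N] (A : Subgroup N)
    (hA : A ≤ Subgroup.center N) (hcyc : IsCyclic A) (hfin : Finite A)
    (hcomm : ∀ x y : N, ⁅x, y⁆ ∈ A)
    (hX : Finite (N ⧸ Subgroup.center N))
    (L : Subgroup N) (hZL : Subgroup.center N ≤ L) (hLnormal : L.Normal)
    (hLab : ∀ x y : L, x * y = y * x)
    (χ : L →* ℂˣ)
    (hgen : Function.Injective fun a : A => χ ⟨(a : N), hZL (hA a.2)⟩) :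
    (∀ θ : L →* ℂˣ,
      (∀ (z : N) (hz : z ∈ Subgroup.center N), θ ⟨z, hZL hz⟩ = χ ⟨z, hZL hz⟩) →
      ∀ (n : N) (θ' : L →* ℂˣ),
        (∀ (x : N) (hx : x ∈ L), θ' ⟨x, hx⟩ = θ ⟨n⁻¹ * x * n, hLnormal.conj_mem' x hx n⟩) →
        (∀ (z : N) (hz : z ∈ Subgroup.center N), θ' ⟨z, hZL hz⟩ = χ ⟨z, hZL hz⟩)) ∧
    (∀ θ₁ θ₂ : L →* ℂˣ,
      (∀ (z : N) (hz : z ∈ Subgroup.center N), θ₁ ⟨z, hZL hz⟩ = χ ⟨z, hZL hz⟩) →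
      (∀ (z : N) (hz : z ∈ Subgroup.center N), θ₂ ⟨z, hZL hz⟩ = χ ⟨z, hZL hz⟩) →
      ∃ n : N, ∀ (x : N) (hx : x ∈ L),
        θ₂ ⟨x, hx⟩ = θ₁ ⟨n⁻¹ * x * n, hLnormal.conj_mem' x hx n⟩) ∧
    (∀ θ : L →* ℂˣ,
      (∀ (z : N) (hz : z ∈ Subgroup.center N), θ ⟨z, hZL hz⟩ = χ ⟨z, hZL hz⟩) →
      ∀ n : N,
        ((∀ (x : N) (hx : x ∈ L),
            θ ⟨x, hx⟩ = θ ⟨n⁻¹ * x * n, hLnormal.conj_mem' x hx n⟩) ↔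
          n ∈ Subgroup.centralizer (L : Set N))) := by
  -- helper: genuineness
  have K1 : ∀ (a : N) (ha : a ∈ A), χ ⟨a, hZL (hA ha)⟩ = 1 → a = 1 := by
    intro a ha h
    have h1 : χ ⟨((⟨a, ha⟩ : A) : N), hZL (hA (⟨a, ha⟩ : A).2)⟩ =
        χ ⟨(((1 : A)) : N), hZL (hA (1 : A).2)⟩ := by
      have : (⟨((1 : A) : N), hZL (hA (1 : A).2)⟩ : L) = 1 := Subtype.ext rfl
      rw [this, map_one]
      exact h
    have := hgen h1
    exact congrArg Subtype.val this
  have conj_eq : ∀ n x : N, n⁻¹ * x * n = ⁅n⁻¹, x⁆ * x := by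
    intro n x
    simp only [commutatorElement_def]
    group
  refine ⟨?_, ?_, ?_⟩
  · -- Part 1
    intro θ hθ n θ' hθ' z hz
    have hz' : n⁻¹ * z * n = z := by
      have h := Subgroup.mem_center_iff.mp hz n⁻¹
      calc n⁻¹ * z * n = (n⁻¹ * z) * n := by group
        _ = (z * n⁻¹) * n := by rw [h]
        _ = z := by group
    have heq : (⟨n⁻¹ * z * n, hLnormal.conj_mem' z (hZL hz) n⟩ : L) = ⟨z, hZL hz⟩ :=
      Subtype.ext hz'
    rw [hθ' z (hZL hz), heq, hθ z hz]
  · -- Part 2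
    intro θ₁ θ₂ h₁ h₂
    classical
    have hcj : ∀ u v : N, u * v * u⁻¹ = ⁅u, v⁆ * v := by
      intro u v; simp only [commutatorElement_def]; group
    -- commutator bilinearity
    have commL : ∀ n x y : N, ⁅n, x * y⁆ = ⁅n, x⁆ * ⁅n, y⁆ := by
      intro n x y
      have hxy : x * ⁅n, y⁆ = ⁅n, y⁆ * x :=
        Subgroup.mem_center_iff.mp (hA (hcomm n y)) x
      calc ⁅n, x * y⁆ = (n * x * n⁻¹) * (n * y * n⁻¹) * (x * y)⁻¹ := by
            simp only [commutatorElement_def]; group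
        _ = (⁅n, x⁆ * x) * (⁅n, y⁆ * y) * (x * y)⁻¹ := by rw [hcj n x, hcj n y]
        _ = ⁅n, x⁆ * (x * ⁅n, y⁆) * x⁻¹ := by group
        _ = ⁅n, x⁆ * (⁅n, y⁆ * x) * x⁻¹ := by rw [hxy]
        _ = ⁅n, x⁆ * ⁅n, y⁆ := by group
    have commR : ∀ m n x : N, ⁅m * n, x⁆ = ⁅m, x⁆ * ⁅n, x⁆ := by
      intro m n x
      have hm : m * ⁅n, x⁆ = ⁅n, x⁆ * m :=
        Subgroup.mem_center_iff.mp (hA (hcomm n x)) m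
      have hsw : ⁅n, x⁆ * ⁅m, x⁆ = ⁅m, x⁆ * ⁅n, x⁆ :=
        Subgroup.mem_center_iff.mp (hA (hcomm m x)) ⁅n, x⁆
      calc ⁅m * n, x⁆ = m * (n * x * n⁻¹) * m⁻¹ * x⁻¹ := by
            simp only [commutatorElement_def]; group
        _ = m * (⁅n, x⁆ * x) * m⁻¹ * x⁻¹ := by rw [hcj n x]
        _ = (m * ⁅n, x⁆) * (x * m⁻¹ * x⁻¹) := by group
        _ = (⁅n, x⁆ * m) * (x * m⁻¹ * x⁻¹) := by rw [hm]
        _ = ⁅n, x⁆ * ⁅m, x⁆ := by simp only [commutatorElement_def]; group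
        _ = ⁅m, x⁆ * ⁅n, x⁆ := hsw
    have commZ1 : ∀ (n z : N), z ∈ Subgroup.center N → ⁅n, z⁆ = 1 := fun n z hz =>
      commutatorElement_eq_one_iff_mul_comm.mpr (Subgroup.mem_center_iff.mp hz n)
    have commZ2 : ∀ (n z : N), z ∈ Subgroup.center N → ⁅z, n⁆ = 1 := fun n z hz =>
      commutatorElement_eq_one_iff_mul_comm.mpr (Subgroup.mem_center_iff.mp hz n).symm
    -- the quotient
    letI instCG : CommGroup (N ⧸ Subgroup.center N) :=
      { (inferInstance : Group (N ⧸ Subgroup.center N)) with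
        mul_comm := by
          intro a b
          induction a using QuotientGroup.induction_on with
          | H x =>
          induction b using QuotientGroup.induction_on with
          | H y =>
          show ((x * y : N) : N ⧸ Subgroup.center N) = ((y * x : N) : N ⧸ Subgroup.center N)
          rw [QuotientGroup.eq]
          have : (x * y)⁻¹ * (y * x) = ⁅y⁻¹, x⁻¹⁆ := by
            simp only [commutatorElement_def]; group
          rw [this]
          exact hA (hcomm y⁻¹ x⁻¹) }
    let mk : N →* N ⧸ Subgroup.center N := QuotientGroup.mk' (Subgroup.center N)
    -- pairing, as characters of V
    let bN : N → N →* ℂˣ := fun n =>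
      { toFun := fun m => χ ⟨⁅n, m⁆, hZL (hA (hcomm n m))⟩
        map_one' := by
          show χ ⟨⁅n, (1:N)⁆, hZL (hA (hcomm n 1))⟩ = 1
          have : (⟨⁅n, (1:N)⁆, hZL (hA (hcomm n 1))⟩ : L) = 1 :=
            Subtype.ext (commutatorElement_one_right n)
          rw [this, map_one]
        map_mul' := by
          intro m₁ m₂
          show χ ⟨⁅n, m₁ * m₂⁆, hZL (hA (hcomm n (m₁ * m₂)))⟩
              = χ ⟨⁅n, m₁⁆, hZL (hA (hcomm n m₁))⟩ * χ ⟨⁅n, m₂⁆, hZL (hA (hcomm n m₂))⟩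
          have : (⟨⁅n, m₁ * m₂⁆, hZL (hA (hcomm n (m₁ * m₂)))⟩ : L)
              = ⟨⁅n, m₁⁆, hZL (hA (hcomm n m₁))⟩ * ⟨⁅n, m₂⁆, hZL (hA (hcomm n m₂))⟩ :=
            Subtype.ext (commL n m₁ m₂)
          rw [this, map_mul] }
    let bV : N → ((N ⧸ Subgroup.center N) →* ℂˣ) := fun n =>
      QuotientGroup.lift (Subgroup.center N) (bN n) (by
        intro z hz
        show χ ⟨⁅n, z⁆, hZL (hA (hcomm n z))⟩ = 1
        have : (⟨⁅n, z⁆, hZL (hA (hcomm n z))⟩ : L) = 1 := Subtype.ext (commZ1 n z hz)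
        rw [this, map_one])
    let βN : N →* ((N ⧸ Subgroup.center N) →* ℂˣ) :=
      { toFun := bV
        map_one' := by
          refine MonoidHom.ext fun q => ?_
          induction q using QuotientGroup.induction_on with
          | H m =>
          show χ ⟨⁅(1:N), m⁆, hZL (hA (hcomm 1 m))⟩ = 1
          have : (⟨⁅(1:N), m⁆, hZL (hA (hcomm 1 m))⟩ : L) = 1 :=
            Subtype.ext (commutatorElement_one_left m)
          rw [this, map_one]
        map_mul' := by
          intro n₁ n₂
          refine MonoidHom.ext fun q => ?_
          induction q using QuotientGroup.induction_on with
          | H m =>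
          show χ ⟨⁅n₁ * n₂, m⁆, hZL (hA (hcomm (n₁*n₂) m))⟩ =
            χ ⟨⁅n₁, m⁆, hZL (hA (hcomm n₁ m))⟩ * χ ⟨⁅n₂, m⁆, hZL (hA (hcomm n₂ m))⟩
          have : (⟨⁅n₁ * n₂, m⁆, hZL (hA (hcomm (n₁*n₂) m))⟩ : L)
              = ⟨⁅n₁, m⁆, hZL (hA (hcomm n₁ m))⟩ * ⟨⁅n₂, m⁆, hZL (hA (hcomm n₂ m))⟩ :=
            Subtype.ext (commR n₁ n₂ m)
          rw [this, map_mul] }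
    let β : (N ⧸ Subgroup.center N) →* ((N ⧸ Subgroup.center N) →* ℂˣ) :=
      QuotientGroup.lift (Subgroup.center N) βN (by
        intro z hz
        refine MonoidHom.ext fun q => ?_
        induction q using QuotientGroup.induction_on with
        | H m =>
        show χ ⟨⁅z, m⁆, hZL (hA (hcomm z m))⟩ = 1
        have : (⟨⁅z, m⁆, hZL (hA (hcomm z m))⟩ : L) = 1 := Subtype.ext (commZ2 m z hz)
        rw [this, map_one])
    have hβ : ∀ n m : N, β (mk n) (mk m) = χ ⟨⁅n, m⁆, hZL (hA (hcomm n m))⟩ := fun n m => rfl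
    -- β is injective
    have hβinj : Function.Injective β := by
      rw [injective_iff_map_eq_one]
      intro v hv
      obtain ⟨n, rfl⟩ := QuotientGroup.mk'_surjective (Subgroup.center N) v
      refine (QuotientGroup.eq_one_iff n).mpr (Subgroup.mem_center_iff.mpr fun g => ?_)
      have h1 : χ ⟨⁅n, g⁆, hZL (hA (hcomm n g))⟩ = 1 := by
        have := DFunLike.congr_fun hv (mk g)
        exact this
      have h2 : ⁅n, g⁆ = 1 := K1 _ (hcomm n g) h1
      exact (commutatorElement_eq_one_iff_mul_comm.mp h2).symm
    haveI : Finite ((N ⧸ Subgroup.center N) →* ℂˣ) := charFinite (N ⧸ Subgroup.center N)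
    have hβsurj : Function.Surjective β := by
      have hb : Function.Bijective β :=
        (Nat.bijective_iff_injective_and_card β).mpr ⟨hβinj, (charCard (N ⧸ Subgroup.center N)).symm⟩
      exact hb.2
    -- the subgroup W and the character δW
    let W : Subgroup (N ⧸ Subgroup.center N) := L.map mk
    let δ : L →* ℂˣ := θ₂ * θ₁⁻¹
    have hδ : ∀ (x : N) (hx : x ∈ L), δ ⟨x, hx⟩ = θ₂ ⟨x, hx⟩ * (θ₁ ⟨x, hx⟩)⁻¹ := fun x hx => rfl
    let ofL : L →* W := MonoidHom.codRestrict (mk.comp L.subtype) W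
      (fun x => Subgroup.mem_map.mpr ⟨x.1, x.2, rfl⟩)
    have hofLsurj : Function.Surjective ofL := by
      rintro ⟨w, hw⟩
      obtain ⟨x, hxL, hxw⟩ := Subgroup.mem_map.mp hw
      exact ⟨⟨x, hxL⟩, Subtype.ext hxw⟩
    have hkerLsurj : Function.Surjective (QuotientGroup.kerLift ofL) := by
      intro w
      obtain ⟨x, hx⟩ := hofLsurj w
      exact ⟨↑x, by rwa [QuotientGroup.kerLift_mk]⟩
    let e : (L ⧸ ofL.ker) ≃* W :=
      MulEquiv.ofBijective (QuotientGroup.kerLift ofL)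
        ⟨QuotientGroup.kerLift_injective ofL, hkerLsurj⟩
    have hkercond : ∀ x : L, x ∈ ofL.ker → δ x = 1 := by
      intro x hx
      have h1 : mk (x : N) = 1 := congrArg Subtype.val (MonoidHom.mem_ker.mp hx)
      have h2 : (x : N) ∈ Subgroup.center N := (QuotientGroup.eq_one_iff _).mp h1
      have h3 : δ ⟨(x : N), x.2⟩ = 1 := by
        rw [hδ (x : N) x.2, h₁ (x : N) h2, h₂ (x : N) h2, mul_inv_cancel]
      simpa using h3
    let δq : (L ⧸ ofL.ker) →* ℂˣ := QuotientGroup.lift ofL.ker δ hkercond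
    let δW : W →* ℂˣ := δq.comp e.symm.toMonoidHom
    have hδW : ∀ x : L, δW (ofL x) = δ x := by
      intro x
      have h1 : e.symm (ofL x) = (↑x : L ⧸ ofL.ker) := by
        apply e.injective
        rw [MulEquiv.apply_symm_apply]
        exact (QuotientGroup.kerLift_mk ofL x).symm
      show δq (e.symm (ofL x)) = δ x
      rw [h1]
      exact QuotientGroup.lift_mk' _ _ x
    -- extend δW to a character of V, and realize it by conjugation
    obtain ⟨φ, hφ⟩ := resSurj (N ⧸ Subgroup.center N) W δW
    obtain ⟨v, hv⟩ := hβsurj φ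
    obtain ⟨m, rfl⟩ := QuotientGroup.mk'_surjective (Subgroup.center N) v
    refine ⟨m⁻¹, ?_⟩
    intro x hx
    have hcA : ⁅m, x⁆ ∈ A := hcomm m x
    have hsplit : (⟨m⁻¹⁻¹ * x * m⁻¹, hLnormal.conj_mem' x hx m⁻¹⟩ : L)
        = ⟨⁅m, x⁆, hZL (hA hcA)⟩ * ⟨x, hx⟩ := by
      refine Subtype.ext ?_
      show m⁻¹⁻¹ * x * m⁻¹ = ⁅m, x⁆ * x
      simp only [commutatorElement_def]
      group
    have hχδ : χ ⟨⁅m, x⁆, hZL (hA hcA)⟩ = δ ⟨x, hx⟩ := by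
      have e1 : χ ⟨⁅m, x⁆, hZL (hA hcA)⟩ = φ (mk x) := by
        rw [← hβ m x, hv]
      have e2 : φ (mk x) = δW (ofL ⟨x, hx⟩) := by
        have := DFunLike.congr_fun hφ (ofL ⟨x, hx⟩)
        exact this.symm ▸ rfl
      rw [e1, e2, hδW]
    rw [hsplit, map_mul, h₁ ⁅m, x⁆ (hA hcA), hχδ, hδ x hx]
    group
  · -- Part 3
    intro θ hθ n
    constructor
    · intro hfix
      rw [Subgroup.mem_centralizer_iff]
      intro g hg
      have h1 := hfix g hg
      have hcA : ⁅n⁻¹, g⁆ ∈ A := hcomm n⁻¹ g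
      have hcL : ⁅n⁻¹, g⁆ ∈ L := hZL (hA hcA)
      have hsplit : (⟨n⁻¹ * g * n, hLnormal.conj_mem' g hg n⟩ : L)
          = ⟨⁅n⁻¹, g⁆, hcL⟩ * ⟨g, hg⟩ := Subtype.ext (conj_eq n g)
      rw [hsplit, map_mul] at h1
      have h2 : θ ⟨⁅n⁻¹, g⁆, hcL⟩ = 1 := right_eq_mul.mp h1
      have h3 : χ ⟨⁅n⁻¹, g⁆, hZL (hA hcA)⟩ = 1 := by
        rw [← hθ ⁅n⁻¹, g⁆ (hA hcA)]
        exact h2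
      have h4 : ⁅n⁻¹, g⁆ = 1 := K1 _ hcA h3
      have h5 : n⁻¹ * g = g * n⁻¹ := commutatorElement_eq_one_iff_mul_comm.mp h4
      calc g * n = n * (n⁻¹ * g) * n := by group
        _ = n * (g * n⁻¹) * n := by rw [h5]
        _ = n * g := by group
    · intro hc x hx
      have h := Subgroup.mem_centralizer_iff.mp hc x hx
      have hx' : n⁻¹ * x * n = x := by
        calc n⁻¹ * x * n = n⁻¹ * (x * n) := by group
          _ = n⁻¹ * (n * x) := by rw [h]
          _ = x := by group
      exact congrArg θ (Subtype.ext hx'.symm)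
end

section
/- Let (N,A) be a pair of Heisenberg type and let L be an abelian subgroup of N containing Z(N) that admits a genuine character. Then the following conditions are equivalent: (a) [L : Z(N)] = [N : L]; (b) Z_N(L) = L; (c) L is a maximal abelian subgroup of N; (d) the homomorphism L/Z(N) → Hom(N/L, A) induced by x ↦ [x,·] is a group isomorphism. (A subgroup L satisfying these conditions is called a Lagrangian subgroup of N.) -/
open scoped commutatorElement

section aux
variable {N : Type*} [Group N] {A : Subgroup N}

private lemma hcentral (hA : A ≤ Subgroup.center N) (hcomm : ∀ x y : N, ⁅x, y⁆ ∈ A)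
    (x y g : N) : g * ⁅x, y⁆ = ⁅x, y⁆ * g :=
  Subgroup.mem_center_iff.mp (hA (hcomm x y)) g

private lemma comm_left (hA : A ≤ Subgroup.center N) (hcomm : ∀ x y : N, ⁅x, y⁆ ∈ A)
    (x y z : N) : ⁅x * y, z⁆ = ⁅x, z⁆ * ⁅y, z⁆ := by
  have h1 : x * ⁅y, z⁆ = ⁅y, z⁆ * x := hcentral hA hcomm y z x
  calc ⁅x * y, z⁆ = (x * ⁅y, z⁆) * (z * x⁻¹ * z⁻¹) := by
        simp only [commutatorElement_def]; group
    _ = (⁅y, z⁆ * x) * (z * x⁻¹ * z⁻¹) := by rw [h1]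
    _ = ⁅y, z⁆ * ⁅x, z⁆ := by simp only [commutatorElement_def]; group
    _ = ⁅x, z⁆ * ⁅y, z⁆ := hcentral hA hcomm x z _

private lemma comm_right (hA : A ≤ Subgroup.center N) (hcomm : ∀ x y : N, ⁅x, y⁆ ∈ A)
    (x y z : N) : ⁅x, y * z⁆ = ⁅x, y⁆ * ⁅x, z⁆ := by
  have h1 : y * ⁅x, z⁆ = ⁅x, z⁆ * y := hcentral hA hcomm x z y
  calc ⁅x, y * z⁆ = ⁅x, y⁆ * (y * ⁅x, z⁆ * y⁻¹) := by
        simp only [commutatorElement_def]; group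
    _ = ⁅x, y⁆ * (⁅x, z⁆ * y * y⁻¹) := by rw [h1]
    _ = ⁅x, y⁆ * ⁅x, z⁆ := by group

private lemma comm_inv_left (hA : A ≤ Subgroup.center N) (hcomm : ∀ x y : N, ⁅x, y⁆ ∈ A)
    (x y : N) : ⁅x⁻¹, y⁆ = ⁅x, y⁆⁻¹ := by
  have := comm_left hA hcomm x⁻¹ x y
  rw [inv_mul_cancel, commutatorElement_one_left] at this
  exact eq_inv_of_mul_eq_one_left this.symm

private lemma card_hom_le (Q : Type*) [Group Q] [Finite Q] (hQ : ∀ a b : Q, a * b = b * a)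
    {A' : Type*} [Group A'] (ρ : A' →* ℂˣ) (hρ : Function.Injective ρ) :
    Nat.card (Q →* A') ≤ Nat.card Q := by
  letI cg : CommGroup Q := { (inferInstance : Group Q) with mul_comm := hQ }
  haveI : NeZero ((Monoid.exponent Q : ℕ) : ℂ) :=
    ⟨Nat.cast_ne_zero.mpr Monoid.exponent_ne_zero_of_finite⟩
  obtain ⟨e⟩ := CommGroup.monoidHom_mulEquiv_of_hasEnoughRootsOfUnity Q ℂ
  haveI : Finite (Q →* ℂˣ) := Finite.of_equiv Q e.symm.toEquiv
  have hinj : Function.Injective (fun f : Q →* A' => ρ.comp f) := by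
    intro f g h
    ext q
    exact hρ (congrArg (fun F : Q →* ℂˣ => F q) h)
  calc Nat.card (Q →* A') ≤ Nat.card (Q →* ℂˣ) := Nat.card_le_card_of_injective _ hinj
    _ = Nat.card Q := Nat.card_congr e.toEquiv

private lemma surj_of_inj_card {α β : Type*} [Finite α] [Finite β] (f : α → β)
    (hf : Function.Injective f) (h : Nat.card β ≤ Nat.card α) : Function.Surjective f := by
  haveI := Fintype.ofFinite α; haveI := Fintype.ofFinite β
  exact ((Fintype.bijective_iff_injective_and_card f).mpr
    ⟨hf, le_antisymm (Fintype.card_le_of_injective f hf)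
      (by simpa [Nat.card_eq_fintype_card] using h)⟩).surjective

end aux

/-- For a Heisenberg pair `(N, A)` and an abelian subgroup `L` containing `Z(N)`
admitting a genuine character, the following are equivalent:
(a) `[L : Z(N)] = [N : L]`; (b) `Z_N(L) = L`; (c) `L` is a maximal abelian subgroup of `N`;
(d) the homomorphism `L/Z(N) → Hom(N/L, A)` induced by `x ↦ [x,·]` is an isomorphism. -/
theorem stmt_4 (N : Type*) [Group N] (A : Subgroup N)
    (hA : A ≤ Subgroup.center N) (hcyc : IsCyclic A) (hfin : Finite A)
    (hcomm : ∀ x y : N, ⁅x, y⁆ ∈ A)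
    (hX : Finite (N ⧸ Subgroup.center N))
    (L : Subgroup N) (hZL : Subgroup.center N ≤ L)
    (hLab : ∀ x y : L, x * y = y * x)
    (hgen : ∃ χ : L →* ℂˣ, Function.Injective fun a : A => χ ⟨(a : N), hZL (hA a.2)⟩) :
    ((Subgroup.center N).relIndex L = L.index ↔
      Subgroup.centralizer (L : Set N) = L) ∧
    ((Subgroup.center N).relIndex L = L.index ↔
      (∀ L' : Subgroup N, L ≤ L' → (∀ x y : L', x * y = y * x) → L' = L)) ∧
    ((Subgroup.center N).relIndex L = L.index ↔
      ((∀ x ∈ L, (∀ y : N, ⁅x, y⁆ = 1) → x ∈ Subgroup.center N) ∧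
        (∀ f : N → A, (∀ y z : N, f (y * z) = f y * f z) →
          (∀ (y : N), ∀ l ∈ L, f (y * l) = f y) →
          ∃ x ∈ L, ∀ y : N, ((f y : N) = ⁅x, y⁆)))) := by
  classical
  obtain ⟨χ, hχ⟩ := hgen
  set Z := Subgroup.center N with hZdef
  set C := Subgroup.centralizer (L : Set N) with hCdef
  have hbl : ∀ x y z : N, ⁅x * y, z⁆ = ⁅x, z⁆ * ⁅y, z⁆ := comm_left hA hcomm
  have hbr : ∀ x y z : N, ⁅x, y * z⁆ = ⁅x, y⁆ * ⁅x, z⁆ := comm_right hA hcomm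
  have hbi : ∀ x y : N, ⁅x⁻¹, y⁆ = ⁅x, y⁆⁻¹ := comm_inv_left hA hcomm
  have hLC : L ≤ C := fun x hx => Subgroup.mem_centralizer_iff.mpr fun l hl =>
    Subtype.ext_iff.mp (hLab ⟨l, hl⟩ ⟨x, hx⟩)
  have hZC : Z ≤ C := hZL.trans hLC
  have hconj : ∀ g n : N, g * n * g⁻¹ = ⁅g, n⁆ * n := by
    intro g n; rw [commutatorElement_def]; group
  haveI hCn : C.Normal := ⟨fun n hn g => by
    rw [hconj]; exact C.mul_mem (hZC (hA (hcomm g n))) hn⟩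
  -- injective embedding of A into ℂˣ
  have hAL : A ≤ L := hA.trans hZL
  have hρ : Function.Injective (χ.comp (Subgroup.inclusion hAL)) := fun a b hab => hχ hab
  letI : CommGroup A := { (inferInstance : Group A) with
    mul_comm := fun a b => Subtype.ext (Subgroup.mem_center_iff.mp (hA a.2) b).symm }
  -- finiteness of N ⧸ C
  haveI hfinNC : Finite (N ⧸ C) := by
    have hsurj : Function.Surjective (QuotientGroup.map Z C (MonoidHom.id N) fun x hx => hZC hx) := by
      intro q
      obtain ⟨n, rfl⟩ := QuotientGroup.mk_surjective q
      exact ⟨(n : N ⧸ Z), QuotientGroup.map_mk _ _ _ _ _⟩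
    exact Finite.of_surjective _ hsurj
  -- commutativity of quotients
  have hQCcomm : ∀ a b : N ⧸ C, a * b = b * a := by
    intro a b
    induction a using QuotientGroup.induction_on with | H y =>
    induction b using QuotientGroup.induction_on with | H z =>
    show ((y : N ⧸ C) * z) = z * y
    rw [← QuotientGroup.mk_mul, ← QuotientGroup.mk_mul]
    refine QuotientGroup.eq.mpr ?_
    have h1 : (y * z)⁻¹ * (z * y) = ⁅z⁻¹, y⁻¹⁆ := by
      rw [commutatorElement_def]; group
    rw [h1]; exact hZC (hA (hcomm _ _))
  have hQLcomm : ∀ a b : L ⧸ Z.subgroupOf L, a * b = b * a := by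
    intro a b
    induction a using QuotientGroup.induction_on with | H y =>
    induction b using QuotientGroup.induction_on with | H z =>
    rw [← QuotientGroup.mk_mul, ← QuotientGroup.mk_mul, hLab y z]
  haveI hfinHomC : Finite ((N ⧸ C) →* A) :=
    Finite.of_injective (fun f => (f : (N ⧸ C) → A)) DFunLike.coe_injective
  -- the pairing homomorphism Φ : L →* ((N ⧸ C) →* A)
  have hrowmul : ∀ x y z : N, (⟨⁅x, y * z⁆, hcomm x (y * z)⟩ : A) =
      ⟨⁅x, y⁆, hcomm x y⟩ * ⟨⁅x, z⁆, hcomm x z⟩ := fun x y z => Subtype.ext (hbr x y z)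
  have hkerC : ∀ (x : L), ∀ c ∈ C, (MonoidHom.mk' (fun y => (⟨⁅(x : N), y⁆, hcomm _ y⟩ : A))
      (hrowmul x)) c = 1 := by
    intro x c hc
    exact Subtype.ext (commutatorElement_eq_one_iff_mul_comm.mpr
      (Subgroup.mem_centralizer_iff.mp hc (x : N) x.2))
  let Φfun : L → ((N ⧸ C) →* A) := fun x =>
    QuotientGroup.lift C (MonoidHom.mk' (fun y => (⟨⁅(x : N), y⁆, hcomm _ y⟩ : A)) (hrowmul x))
      (hkerC x)
  have hΦfun : ∀ (x : L) (y : N), Φfun x (y : N ⧸ C) = ⟨⁅(x : N), y⁆, hcomm _ y⟩ := by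
    intro x y; rfl
  let Φ : L →* ((N ⧸ C) →* A) := MonoidHom.mk' Φfun (by
    intro x x'
    ext y
    show ⁅((x : N) * (x' : N)), y⁆ = ⁅(x : N), y⁆ * ⁅(x' : N), y⁆
    exact hbl (x : N) (x' : N) y)
  have hΦker : Φ.ker = Z.subgroupOf L := by
    ext x
    rw [MonoidHom.mem_ker, Subgroup.mem_subgroupOf]
    constructor
    · intro h
      rw [hZdef]
      refine Subgroup.mem_center_iff.mpr fun g => ?_
      have h2 : Φfun x (g : N ⧸ C) = 1 := by rw [show Φfun x = Φ x from rfl, h]; rfl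
      have h3 : ⁅(x : N), g⁆ = 1 := Subtype.ext_iff.mp (h2)
      exact (commutatorElement_eq_one_iff_mul_comm.mp h3).symm
    · intro h
      ext y
      show ⁅(x : N), y⁆ = 1
      exact commutatorElement_eq_one_iff_mul_comm.mpr (Subgroup.mem_center_iff.mp h y).symm
  have hrelcard : Z.relIndex L = Nat.card (L ⧸ Φ.ker) := by
    rw [Subgroup.relIndex, Subgroup.index_eq_card, hΦker]
  have hcard1 : Z.relIndex L ≤ C.index := by
    calc Z.relIndex L = Nat.card (L ⧸ Φ.ker) := hrelcard
      _ ≤ Nat.card ((N ⧸ C) →* A) :=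
          Nat.card_le_card_of_injective _ (QuotientGroup.kerLift_injective Φ)
      _ ≤ Nat.card (N ⧸ C) := card_hom_le _ hQCcomm _ hρ
      _ = C.index := (Subgroup.index_eq_card C).symm
  haveI hfinQL : Finite (L ⧸ Z.subgroupOf L) := by
    rw [← hΦker]
    exact Finite.of_injective _ (QuotientGroup.kerLift_injective Φ)
  haveI hfinHomL : Finite ((L ⧸ Z.subgroupOf L) →* A) :=
    Finite.of_injective (fun f => (f : (L ⧸ Z.subgroupOf L) → A)) DFunLike.coe_injective
  -- Ψ : N →* ((L ⧸ Z.subgroupOf L) →* A)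
  have hcolmul : ∀ (y : N) (x x' : L), (⟨⁅((x * x' : L) : N), y⁆, hcomm _ y⟩ : A) =
      ⟨⁅(x : N), y⁆, hcomm _ y⟩ * ⟨⁅(x' : N), y⁆, hcomm _ y⟩ := by
    intro y x x'
    push_cast
    exact Subtype.ext (hbl (x : N) (x' : N) y)
  have hkerZ : ∀ (y : N), ∀ x ∈ Z.subgroupOf L,
      (MonoidHom.mk' (fun x : L => (⟨⁅(x : N), y⁆, hcomm _ y⟩ : A)) (hcolmul y)) x = 1 := by
    intro y x hx
    refine Subtype.ext (commutatorElement_eq_one_iff_mul_comm.mpr ?_)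
    exact (Subgroup.mem_center_iff.mp (Subgroup.mem_subgroupOf.mp hx) y).symm
  let Ψfun : N → ((L ⧸ Z.subgroupOf L) →* A) := fun y =>
    QuotientGroup.lift (Z.subgroupOf L)
      (MonoidHom.mk' (fun x : L => (⟨⁅(x : N), y⁆, hcomm _ y⟩ : A)) (hcolmul y)) (hkerZ y)
  let Ψ : N →* ((L ⧸ Z.subgroupOf L) →* A) := MonoidHom.mk' Ψfun (by
    intro y y'
    ext x
    show ⁅(x : N), y * y'⁆ = ⁅(x : N), y⁆ * ⁅(x : N), y'⁆
    exact hbr (x : N) y y')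
  have hΨker : Ψ.ker = C := by
    ext y
    rw [MonoidHom.mem_ker]
    constructor
    · intro h
      refine Subgroup.mem_centralizer_iff.mpr fun l hl => ?_
      have h2 : Ψfun y ((⟨l, hl⟩ : L) : L ⧸ Z.subgroupOf L) = 1 := by
        rw [show Ψfun y = Ψ y from rfl, h]; rfl
      have h3 : ⁅l, y⁆ = 1 := Subtype.ext_iff.mp h2
      exact commutatorElement_eq_one_iff_mul_comm.mp h3
    · intro h
      ext x
      show ⁅(x : N), y⁆ = 1
      exact commutatorElement_eq_one_iff_mul_comm.mpr (Subgroup.mem_centralizer_iff.mp h (x : N) x.2)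
  have hcard2 : C.index ≤ Z.relIndex L := by
    calc C.index = Nat.card (N ⧸ Ψ.ker) := by rw [hΨker, Subgroup.index_eq_card]
      _ ≤ Nat.card ((L ⧸ Z.subgroupOf L) →* A) :=
          Nat.card_le_card_of_injective _ (QuotientGroup.kerLift_injective Ψ)
      _ ≤ Nat.card (L ⧸ Z.subgroupOf L) := card_hom_le _ hQLcomm _ hρ
      _ = Z.relIndex L := by rw [Subgroup.relIndex, Subgroup.index_eq_card]
  have key : Z.relIndex L = C.index := le_antisymm hcard1 hcard2
  -- nonvanishing of indices
  have hZind : Z.index ≠ 0 := Nat.card_ne_zero.mpr ⟨inferInstance, hX⟩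
  have hmulZL := Subgroup.relIndex_mul_index hZL
  have hrelne : Z.relIndex L ≠ 0 := fun h => hZind (by rw [← hmulZL, h, zero_mul])
  have hCind : C.index ≠ 0 := key ▸ hrelne
  -- the (a) ↔ (b) equivalence
  have iff_b : Z.relIndex L = L.index ↔ C = L := by
    constructor
    · intro hab
      have h1 : L.relIndex C * C.index = L.index := Subgroup.relIndex_mul_index hLC
      have h2 : L.relIndex C * C.index = 1 * C.index := by
        rw [h1, ← hab, key, one_mul]
      have hrc : L.relIndex C = 1 :=
        Nat.eq_of_mul_eq_mul_right (Nat.pos_of_ne_zero hCind) h2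
      exact le_antisymm (Subgroup.relIndex_eq_one.mp hrc) hLC
    · intro h; rw [key, h]
  have hZiff : ∀ x : N, (∀ y : N, ⁅x, y⁆ = 1) → x ∈ Z := fun x h =>
    Subgroup.mem_center_iff.mpr fun g => (commutatorElement_eq_one_iff_mul_comm.mp (h g)).symm
  refine ⟨iff_b, ?_, ?_⟩
  · -- (a) ↔ (c)
    constructor
    · intro hab L' hLL' hab'
      have hCL := iff_b.mp hab
      refine le_antisymm (fun x hx => ?_) hLL'
      have hxC : x ∈ C := Subgroup.mem_centralizer_iff.mpr fun l hl =>
        Subtype.ext_iff.mp (hab' ⟨l, hLL' hl⟩ ⟨x, hx⟩)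
      rwa [hCL] at hxC
    · intro hmax
      refine iff_b.mpr (le_antisymm (fun w hw => ?_) hLC)
      set S : Set N := insert w (L : Set N) with hSdef
      have hcomm2 : ∀ a ∈ S, ∀ b ∈ S, a * b = b * a := by
        intro a ha b hb
        rcases ha with rfl | ha <;> rcases hb with rfl | hb
        · rfl
        · exact (Subgroup.mem_centralizer_iff.mp hw b hb).symm
        · exact Subgroup.mem_centralizer_iff.mp hw a ha
        · exact Subtype.ext_iff.mp (hLab ⟨a, ha⟩ ⟨b, hb⟩)
      have hSc : Subgroup.closure S ≤ Subgroup.centralizer S :=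
        (Subgroup.closure_le _).mpr fun s hs =>
          Subgroup.mem_centralizer_iff.mpr fun h hh => hcomm2 h hh s hs
      have hSc2 : Subgroup.closure S ≤
          Subgroup.centralizer (Subgroup.closure S : Set N) :=
        (Subgroup.closure_le _).mpr fun s hs =>
          Subgroup.mem_centralizer_iff.mpr fun h hh =>
            (Subgroup.mem_centralizer_iff.mp (hSc hh) s hs).symm
      have hLle : L ≤ Subgroup.closure S := fun x hx =>
        Subgroup.subset_closure (Set.mem_insert_of_mem _ hx)
      have hcl : Subgroup.closure S = L := by
        refine hmax (Subgroup.closure S) hLle fun x y => ?_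
        exact Subtype.ext (Subgroup.mem_centralizer_iff.mp (hSc2 y.2) (x : N) x.2)
      have : w ∈ Subgroup.closure S := Subgroup.subset_closure (Set.mem_insert w _)
      rwa [hcl] at this
  · -- (a) ↔ (d)
    constructor
    · intro hab
      refine ⟨fun x _ h => hZiff x h, ?_⟩
      intro f hfmul hfinv
      have hCL := iff_b.mp hab
      let f' : N →* A := MonoidHom.mk' f hfmul
      have hf1 : f 1 = 1 := map_one f'
      have hker : ∀ c ∈ C, f' c = 1 := by
        intro c hc
        rw [hCL] at hc
        show f c = 1
        rw [← one_mul c, hfinv 1 c hc, hf1]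
      let F : (N ⧸ C) →* A := QuotientGroup.lift C f' hker
      have hsurj : Function.Surjective (QuotientGroup.kerLift Φ) := by
        refine surj_of_inj_card _ (QuotientGroup.kerLift_injective Φ) ?_
        calc Nat.card ((N ⧸ C) →* A) ≤ Nat.card (N ⧸ C) := card_hom_le _ hQCcomm _ hρ
          _ = C.index := (Subgroup.index_eq_card C).symm
          _ = Z.relIndex L := key.symm
          _ = Nat.card (L ⧸ Φ.ker) := hrelcard
      obtain ⟨q, hq⟩ := hsurj F
      obtain ⟨x, rfl⟩ := QuotientGroup.mk_surjective q
      refine ⟨(x : N), x.2, fun y => ?_⟩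
      have h2 : Φ x ((y : N) : N ⧸ C) = F ((y : N) : N ⧸ C) := by
        rw [← hq]; rfl
      have h3 : (⟨⁅(x : N), y⁆, hcomm _ y⟩ : A) = f y := h2
      exact (Subtype.ext_iff.mp h3).symm
    · rintro ⟨-, hsurj⟩
      refine iff_b.mpr (le_antisymm (fun w hw => ?_) hLC)
      obtain ⟨x, hxL, hx⟩ := hsurj (fun y => ⟨⁅w, y⁆, hcomm w y⟩)
        (fun y z => Subtype.ext (hbr w y z))
        (by
          intro y l hl
          refine Subtype.ext ?_
          show ⁅w, y * l⁆ = ⁅w, y⁆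
          rw [hbr]
          have hwl : ⁅w, l⁆ = 1 := commutatorElement_eq_one_iff_mul_comm.mpr
            (Subgroup.mem_centralizer_iff.mp hw l hl).symm
          rw [hwl, mul_one])
      have hxw : x⁻¹ * w ∈ Z := by
        refine hZiff _ fun y => ?_
        rw [hbl x⁻¹ w y, hbi, ← hx y]
        exact inv_mul_cancel ⁅w, y⁆
      have hwx : w = x * (x⁻¹ * w) := by group
      rw [hwx]
      exact L.mul_mem hxL (hZL hxw)
end

section
/- Let (N,A) be a pair of Heisenberg type. Then N possesses a Lagrangian subgroup, i.e. an abelian subgroup L with Z(N) ≤ L ≤ N and Z_N(L) = L; moreover, the index [N : Z(N)] is a perfect square. -/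
open scoped commutatorElement

lemma card_hom_le_s5 (B A : Type*) [CommGroup B] [Finite B] [CommGroup A] [Finite A]
    [IsCyclic A] : Nat.card (B →* A) ≤ Nat.card B := by
  have hB : NeZero (Monoid.exponent B) := ⟨Monoid.exponent_ne_zero_of_finite⟩
  have hB' : NeZero ((Monoid.exponent B : ℕ) : ℂ) :=
    ⟨by exact_mod_cast hB.out⟩
  have hA : NeZero (Nat.card A) := ⟨Nat.card_pos.ne'⟩
  have hA' : NeZero ((Nat.card A : ℕ) : ℂ) := ⟨by exact_mod_cast hA.out⟩
  obtain ⟨e⟩ := CommGroup.monoidHom_mulEquiv_of_hasEnoughRootsOfUnity B ℂ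
  have hord := HasEnoughRootsOfUnity.natCard_rootsOfUnity ℂ (Nat.card A)
  let e2 : A ≃* rootsOfUnity (Nat.card A) ℂ := mulEquivOfCyclicCardEq hord.symm
  let ψ : A →* ℂˣ := (Subgroup.subtype _).comp e2.toMonoidHom
  have hψ : Function.Injective ψ := Subtype.coe_injective.comp e2.injective
  have hinj : Function.Injective (fun f : B →* A => ψ.comp f) := by
    intro f₁ f₂ h
    ext b
    exact hψ (DFunLike.congr_fun h b)
  have : Finite (B →* ℂˣ) := Finite.of_equiv B e.toEquiv.symm
  calc Nat.card (B →* A) ≤ Nat.card (B →* ℂˣ) := Nat.card_le_card_of_injective _ hinj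
    _ = Nat.card B := Nat.card_congr e.toEquiv

lemma exists_maximal_abelian (N : Type*) [Group N] (hX : Finite (N ⧸ Subgroup.center N)) :
    ∃ L : Subgroup N, Subgroup.center N ≤ L ∧ (∀ x ∈ L, ∀ y ∈ L, x * y = y * x) ∧
      Subgroup.centralizer (L : Set N) = L := by
  classical
  let π := QuotientGroup.mk' (Subgroup.center N)
  let f : Subgroup N → ℕ := fun L => Nat.card (L.map π)
  let S : Set ℕ := {n | ∃ L : Subgroup N, Subgroup.center N ≤ L ∧
      (∀ x ∈ L, ∀ y ∈ L, x * y = y * x) ∧ f L = n}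
  have hne : S.Nonempty :=
    ⟨f (Subgroup.center N), Subgroup.center N, le_rfl,
      fun x hx y hy => (Subgroup.mem_center_iff.mp hy x), rfl⟩
  have hbdd : BddAbove S := by
    refine ⟨Nat.card (N ⧸ Subgroup.center N), ?_⟩
    rintro n ⟨L, -, -, rfl⟩
    exact Subgroup.card_le_card_group _
  obtain ⟨L, hZL, hcm, hfL⟩ := Nat.sSup_mem hne hbdd
  refine ⟨L, hZL, hcm, le_antisymm ?_ fun x hx =>
    Subgroup.mem_centralizer_iff.mpr fun g hg => hcm g hg x hx⟩
  intro x hx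
  by_contra hxL
  have hxc := Subgroup.mem_centralizer_iff.mp hx
  set s : Set N := insert x ↑L with hs_def
  have hs : s ⊆ ↑(Subgroup.centralizer s) := by
    intro a ha
    refine Subgroup.mem_centralizer_iff.mpr fun g hg => ?_
    rcases ha with rfl | ha <;> rcases hg with rfl | hg
    · rfl
    · exact hxc g hg
    · exact (hxc a ha).symm
    · exact hcm g hg a ha
  set L' : Subgroup N := Subgroup.closure s with hL'
  have hLL' : L ≤ L' := fun y hy => Subgroup.subset_closure (Set.mem_insert_of_mem _ hy)
  have hcomm' : ∀ a ∈ L', ∀ b ∈ L', a * b = b * a := by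
    intro a ha b hb
    have h1 : b ∈ Subgroup.centralizer s := (Subgroup.closure_le _).mpr hs hb
    have h2 : a ∈ Subgroup.centralizer (Subgroup.centralizer s : Set N) :=
      Subgroup.closure_le_centralizer_centralizer s ha
    exact (Subgroup.mem_centralizer_iff.mp h2 b h1).symm
  have hxL' : x ∈ L' := Subgroup.subset_closure (Set.mem_insert _ _)
  have hxQ : π x ∉ L.map π := by
    rintro ⟨l, hl, hlx⟩
    obtain ⟨z, hz, hzx⟩ := (QuotientGroup.mk'_eq_mk' (Subgroup.center N)).mp hlx
    exact hxL (hzx ▸ L.mul_mem hl (hZL hz))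
  have hlt : L.map π < L'.map π :=
    lt_of_le_of_ne (Subgroup.map_mono hLL')
      (fun h => hxQ (h ▸ Subgroup.mem_map_of_mem π hxL'))
  have hcard : f L < f L' := by
    have := Set.ncard_lt_ncard (SetLike.coe_ssubset_coe.mpr hlt) (Set.toFinite _)
    rw [← Nat.card_coe_set_eq, ← Nat.card_coe_set_eq] at this
    exact this
  have : f L' ≤ f L := hfL ▸ le_csSup hbdd ⟨L', hZL.trans hLL', hcomm', rfl⟩
  omega

/-- Every pair `(N, A)` of Heisenberg type possesses a Lagrangian subgroup, i.e.
an abelian subgroup `L` with `Z(N) ≤ L` and `Z_N(L) = L`; moreover `[N : Z(N)]` is a perfect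
square. -/
theorem stmt_5 (N : Type*) [Group N] (A : Subgroup N)
    (hA : A ≤ Subgroup.center N) (hcyc : IsCyclic A) (hfin : Finite A)
    (hcomm : ∀ x y : N, ⁅x, y⁆ ∈ A)
    (hX : Finite (N ⧸ Subgroup.center N)) :
    (∃ L : Subgroup N, Subgroup.center N ≤ L ∧ (∀ x y : L, x * y = y * x) ∧
      Subgroup.centralizer (L : Set N) = L) ∧
    (∃ d : ℕ, (Subgroup.center N).index = d ^ 2) := by
  classical
  obtain ⟨L, hZL, hcm, hLcent⟩ := exists_maximal_abelian N hX
  have hCA : ∀ g h : N, ⁅g, h⁆ ∈ Subgroup.center N := fun g h => hA (hcomm g h)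
  have hconj : ∀ (c : N), c ∈ Subgroup.center N → ∀ u : N, u * c * u⁻¹ = c := by
    intro c hc u
    rw [Subgroup.mem_center_iff.mp hc u]
    group
  have key : ∀ g h k : N, ⁅g, h * k⁆ = ⁅g, h⁆ * ⁅g, k⁆ := by
    intro g h k
    have h1 : ⁅g, h * k⁆ = ⁅g, h⁆ * (h * ⁅g, k⁆ * h⁻¹) := by
      simp only [commutatorElement_def]; group
    rw [h1, hconj _ (hCA g k) h]
  have key2 : ∀ g h k : N, ⁅g * h, k⁆ = ⁅g, k⁆ * ⁅h, k⁆ := by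
    intro g h k
    have h1 : ⁅g * h, k⁆ = (g * ⁅h, k⁆ * g⁻¹) * ⁅g, k⁆ := by
      simp only [commutatorElement_def]; group
    rw [h1, hconj _ (hCA h k) g]
    exact Subgroup.mem_center_iff.mp (hCA g k) _
  haveI hLnorm : L.Normal := by
    constructor
    intro l hl g
    have hgl : g * l * g⁻¹ = ⁅g, l⁆ * l := by
      simp only [commutatorElement_def]; group
    rw [hgl]
    exact L.mul_mem (hZL (hCA g l)) hl
  letI instA : CommGroup ↥A :=
    { (inferInstance : Group ↥A) with
      mul_comm := fun a b => Subtype.ext (Subgroup.mem_center_iff.mp (hA b.2) a) }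
  haveI := hcyc
  haveI := hfin
  letI instL : CommGroup ↥L :=
    { (inferInstance : Group ↥L) with
      mul_comm := fun a b => Subtype.ext (hcm a a.2 b b.2) }
  letI instQ : CommGroup (N ⧸ L) :=
    { (inferInstance : Group (N ⧸ L)) with
      mul_comm := by
        intro a b
        induction a using QuotientGroup.induction_on with | _ g =>
        induction b using QuotientGroup.induction_on with | _ h =>
        show ((g * h : N) : N ⧸ L) = ((h * g : N) : N ⧸ L)
        rw [QuotientGroup.eq]
        have h2 : (g * h)⁻¹ * (h * g) = ⁅h⁻¹, g⁻¹⁆ := by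
          simp only [commutatorElement_def]; group
        rw [h2]
        exact hZL (hCA h⁻¹ g⁻¹) }
  set ZL : Subgroup ↥L := (Subgroup.center N).subgroupOf L with hZLdef
  haveI : ZL.Normal := inferInstance
  haveI hBfin : Finite (↥L ⧸ ZL) := by
    let fhom : ↥L →* N ⧸ Subgroup.center N := (QuotientGroup.mk' _).comp L.subtype
    have hker : fhom.ker = ZL := by
      ext l
      simp [fhom, MonoidHom.mem_ker, Subgroup.mem_subgroupOf, QuotientGroup.eq_one_iff,
        ZL]
    have e : (↥L ⧸ ZL) ≃ fhom.range := hker ▸ (QuotientGroup.quotientKerEquivRange fhom).toEquiv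
    exact Finite.of_equiv _ e.symm
  haveI hQfin : Finite (N ⧸ L) := by
    refine Finite.of_surjective
      (QuotientGroup.map (Subgroup.center N) L (MonoidHom.id N) (by simpa using hZL)) ?_
    intro q
    induction q using QuotientGroup.induction_on with | _ g =>
    exact ⟨QuotientGroup.mk g, rfl⟩
  -- pairing N/L → Hom(L/ZL, A)
  let φ₀ : N → (↥L →* ↥A) := fun g =>
    { toFun := fun l => ⟨⁅g, (l : N)⁆, hcomm _ _⟩
      map_one' := by
        apply Subtype.ext
        simp [commutatorElement_def]
      map_mul' := fun l₁ l₂ => Subtype.ext (key g l₁ l₂) }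
  have hker₀ : ∀ g, ZL ≤ (φ₀ g).ker := by
    intro g l hl
    refine MonoidHom.mem_ker.mpr (Subtype.ext ?_)
    exact commutatorElement_eq_one_iff_commute.mpr
      (Subgroup.mem_center_iff.mp (Subgroup.mem_subgroupOf.mp hl) g)
  let φ : N → ((↥L ⧸ ZL) →* ↥A) := fun g => QuotientGroup.lift ZL (φ₀ g) (hker₀ g)
  let Φ : N →* ((↥L ⧸ ZL) →* ↥A) :=
    { toFun := φ
      map_one' := by
        ext b
        simp [φ, φ₀, commutatorElement_def]
      map_mul' := fun g h => by
        ext b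
        simpa [φ, φ₀] using key2 g h b }
  have hLkerΦ : L ≤ Φ.ker := by
    intro l' hl'
    rw [MonoidHom.mem_ker]
    ext b
    simpa [Φ, φ, φ₀, Subtype.ext_iff] using commutatorElement_eq_one_iff_commute.mpr (hcm l' hl' b b.2)
  let F : (N ⧸ L) →* ((↥L ⧸ ZL) →* ↥A) := QuotientGroup.lift L Φ hLkerΦ
  have hFinj : Function.Injective F := by
    rw [injective_iff_map_eq_one]
    intro q hq
    induction q using QuotientGroup.induction_on with | _ g =>
    rw [QuotientGroup.eq_one_iff, ← hLcent]
    refine Subgroup.mem_centralizer_iff.mpr fun h hh => ?_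
    have h1 : φ₀ g ⟨h, hh⟩ = 1 := DFunLike.congr_fun hq (QuotientGroup.mk (⟨h, hh⟩ : ↥L))
    have h2 : ⁅g, h⁆ = 1 := congrArg Subtype.val h1
    exact (commutatorElement_eq_one_iff_commute.mp h2).symm.eq
  -- pairing L/ZL → Hom(N/L, A)
  let χ₀ : ↥L → (N →* ↥A) := fun l =>
    { toFun := fun g => ⟨⁅(l : N), g⁆, hcomm _ _⟩
      map_one' := by
        apply Subtype.ext
        simp [commutatorElement_def]
      map_mul' := fun g h => Subtype.ext (key l g h) }
  have hkerχ : ∀ l : ↥L, L ≤ (χ₀ l).ker := fun l g hg =>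
    MonoidHom.mem_ker.mpr (Subtype.ext (commutatorElement_eq_one_iff_commute.mpr
      (hcm l l.2 g hg)))
  let Ψ : ↥L →* ((N ⧸ L) →* ↥A) :=
    { toFun := fun l => QuotientGroup.lift L (χ₀ l) (hkerχ l)
      map_one' := by
        ext q
        simp [χ₀, commutatorElement_def]
      map_mul' := fun l₁ l₂ => by
        ext q
        simpa [χ₀] using key2 l₁ l₂ q }
  have hZkerΨ : ZL ≤ Ψ.ker := by
    intro l hl
    rw [MonoidHom.mem_ker]
    ext q
    simpa [Ψ, χ₀, Subtype.ext_iff] using commutatorElement_eq_one_iff_commute.mpr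
      ((Subgroup.mem_center_iff.mp (Subgroup.mem_subgroupOf.mp hl) q).symm)
  let G : (↥L ⧸ ZL) →* ((N ⧸ L) →* ↥A) := QuotientGroup.lift ZL Ψ hZkerΨ
  have hGinj : Function.Injective G := by
    rw [injective_iff_map_eq_one]
    intro q hq
    induction q using QuotientGroup.induction_on with | _ l =>
    rw [QuotientGroup.eq_one_iff, hZLdef, Subgroup.mem_subgroupOf]
    refine Subgroup.mem_center_iff.mpr fun g => ?_
    have h1 : χ₀ l g = 1 := DFunLike.congr_fun hq (QuotientGroup.mk g)
    have h2 : ⁅(l : N), g⁆ = 1 := congrArg Subtype.val h1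
    exact (commutatorElement_eq_one_iff_commute.mp h2).symm.eq
  haveI : Finite ((↥L ⧸ ZL) →* ↥A) :=
    Finite.of_injective (fun f => (f : (↥L ⧸ ZL) → ↥A)) DFunLike.coe_injective
  haveI : Finite ((N ⧸ L) →* ↥A) :=
    Finite.of_injective (fun f => (f : (N ⧸ L) → ↥A)) DFunLike.coe_injective
  have c1 : Nat.card (N ⧸ L) ≤ Nat.card (↥L ⧸ ZL) :=
    (Nat.card_le_card_of_injective F hFinj).trans (card_hom_le_s5 _ _)
  have c2 : Nat.card (↥L ⧸ ZL) ≤ Nat.card (N ⧸ L) :=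
    (Nat.card_le_card_of_injective G hGinj).trans (card_hom_le_s5 _ _)
  have hcardeq : Nat.card (↥L ⧸ ZL) = Nat.card (N ⧸ L) := le_antisymm c2 c1
  refine ⟨⟨L, hZL, fun x y => Subtype.ext (hcm x x.2 y y.2), hLcent⟩,
    Nat.card (N ⧸ L), ?_⟩
  have h1 := Subgroup.relIndex_mul_index hZL
  have h2 : (Subgroup.center N).relIndex L = Nat.card (↥L ⧸ ZL) := by
    rw [Subgroup.relIndex, Subgroup.index_eq_card]
  have h3 : L.index = Nat.card (N ⧸ L) := Subgroup.index_eq_card L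
  rw [← h1, h2, h3, hcardeq, sq]
end

section
/- Let G be a group, A a finite cyclic subgroup of the center of G, and (H,N) a special pair in G. Define N_max = {g ∈ G : g commutes with every element of H, and [g,x] ∈ A for all x ∈ G}. Then N ≤ N_max, and for every subgroup N'' with N ≤ N'' ≤ N_max, the pair (H,N'') is again a special pair in G. -/
open scoped commutatorElement
/-- `(H, N)` is a special pair in `G` (with respect to a subgroup `A` of the center of `G`):
`H` and `N` both contain `A`, `H` is a normal subgroup of finite index, every element of `N`
commutes with every element of `H`, `⁅n, g⁆ ∈ A` for all `n ∈ N`, `g ∈ G`, and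
`Z_G(H ⊓ N) = NH`. -/
structure IsSpecialPair {G : Type*} [Group G] (A H N : Subgroup G) : Prop where
  A_le_H : A ≤ H
  A_le_N : A ≤ N
  normal : H.Normal
  finiteIndex : H.FiniteIndex
  commute : ∀ n ∈ N, ∀ h ∈ H, Commute n h
  comm_mem : ∀ n ∈ N, ∀ g : G, ⁅n, g⁆ ∈ A
  centralizer_inf_eq : Subgroup.centralizer ((H ⊓ N : Subgroup G) : Set G) = N ⊔ H

/-- For a special pair `(H, N)` in `G` and
`N_max = {g ∈ G : g commutes with H and ⁅g, x⁆ ∈ A for all x ∈ G}`, one has `N ≤ N_max`,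
and `(H, N'')` is a special pair for every subgroup `N''` with `N ≤ N'' ≤ N_max`. -/
theorem stmt_7 {G : Type*} [Group G] (A H N : Subgroup G)
    (hA : A ≤ Subgroup.center G) (hcyc : IsCyclic A) (hfin : Finite A)
    (hsp : IsSpecialPair A H N) :
    ((N : Set G) ⊆ {g : G | (∀ h ∈ H, Commute g h) ∧ ∀ x : G, ⁅g, x⁆ ∈ A}) ∧
    (∀ N'' : Subgroup G, N ≤ N'' →
      ((N'' : Set G) ⊆ {g : G | (∀ h ∈ H, Commute g h) ∧ ∀ x : G, ⁅g, x⁆ ∈ A}) →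
      IsSpecialPair A H N'') := by
  constructor
  · intro n hn
    exact ⟨fun h hh => hsp.commute n hn h hh, fun x => hsp.comm_mem n hn x⟩
  · intro N'' hle hsub
    refine ⟨hsp.A_le_H, hsp.A_le_N.trans hle, hsp.normal, hsp.finiteIndex,
      fun n hn h hh => (hsub hn).1 h hh, fun n hn g => (hsub hn).2 g, ?_⟩
    apply le_antisymm
    · calc Subgroup.centralizer ((H ⊓ N'' : Subgroup G) : Set G)
          ≤ Subgroup.centralizer ((H ⊓ N : Subgroup G) : Set G) :=
            Subgroup.centralizer_le (SetLike.coe_subset_coe.2 (inf_le_inf_left H hle))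
        _ = N ⊔ H := hsp.centralizer_inf_eq
        _ ≤ N'' ⊔ H := sup_le_sup_right hle H
    · rw [sup_le_iff]
      constructor
      · intro n hn
        rw [Subgroup.mem_centralizer_iff]
        intro x hx
        exact ((hsub hn).1 x (Subgroup.mem_inf.1 hx).1).symm
      · intro h hh
        rw [Subgroup.mem_centralizer_iff]
        intro x hx
        exact (hsub (Subgroup.mem_inf.1 hx).2).1 h hh
end

section
/- Let G be a group, A a finite cyclic subgroup of the center of G, (H,N) a special pair in G, and N' a subgroup of N. Then [g,n] ∈ A for all g ∈ G and n ∈ N', and the map (g,n) ↦ [g,n] is bimultiplicative with left kernel exactly Z_G(N') and right kernel exactly Z_{N'}(G) = N' ∩ Z(G). Consequently it induces a non-degenerate pairing G/Z_G(N') × N'/(N'∩Z(G)) → A; the groups G/Z_G(N') and N'/(N'∩Z(G)) are finite abelian groups of exponent dividing |A|, and the induced map G/Z_G(N') → Hom(N'/(N'∩Z(G)), A), g ↦ [g,·], is a group isomorphism (so the two quotients are in Pontryagin duality). -/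
open scoped commutatorElement

private lemma comm_mul_aux {G : Type*} [Group G] (a b c : G)
    (h1 : ∀ x : G, x * ⁅b, c⁆ = ⁅b, c⁆ * x) (h2 : ∀ x : G, x * ⁅a, c⁆ = ⁅a, c⁆ * x) :
    ⁅a * b, c⁆ = ⁅a, c⁆ * ⁅b, c⁆ := by
  have e : ⁅a * b, c⁆ = a * ⁅b, c⁆ * a⁻¹ * ⁅a, c⁆ := by
    simp only [commutatorElement_def]; group
  rw [e, h1 a, mul_inv_cancel_right]
  exact h2 _

private lemma hasEnough_of_cyclic {A : Type*} [CommGroup A] [Finite A] [IsCyclic A] {n : ℕ}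
    (h : n ∣ Nat.card A) : HasEnoughRootsOfUnity A n := by
  have hm : Nat.card A ≠ 0 := Nat.card_pos.ne'
  obtain ⟨g, hg⟩ := IsCyclic.exists_ofOrder_eq_natCard (α := A)
  obtain ⟨k, hk⟩ := h
  have hk0 : k ≠ 0 := by rintro rfl; simp [hk] at hm
  constructor
  · refine ⟨g ^ k, ?_⟩
    have : orderOf (g ^ k) = n := by
      rw [orderOf_pow, hg, hk, Nat.gcd_eq_right ⟨n, mul_comm n k⟩,
        Nat.mul_div_cancel _ (Nat.pos_of_ne_zero hk0)]
    exact this ▸ IsPrimitiveRoot.orderOf _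
  · have : IsCyclic Aˣ := isCyclic_of_surjective _ (toUnits (G := A)).surjective
    infer_instance

/-- For a special pair `(H, N)` in `G` and a subgroup `N' ≤ N`, the commutator
`(g, n) ↦ ⁅g, n⁆` takes values in `A`, is bimultiplicative, has left kernel `Z_G(N')` and
right kernel `N' ∩ Z(G)`; the quotients `G/Z_G(N')` and `N'/(N' ∩ Z(G))` are finite abelian
of exponent dividing `|A|`, and `g ↦ ⁅g, ·⁆` induces an isomorphism
`G/Z_G(N') ≃ Hom(N'/(N' ∩ Z(G)), A)`. -/
theorem stmt_8 {G : Type*} [Group G] (A H N : Subgroup G)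
    (hA : A ≤ Subgroup.center G) (hcyc : IsCyclic A) (hfin : Finite A)
    (hsp : IsSpecialPair A H N) (N' : Subgroup G) (hN' : N' ≤ N) :
    (∀ g : G, ∀ n ∈ N', ⁅g, n⁆ ∈ A) ∧
    (∀ g₁ g₂ : G, ∀ n ∈ N', ⁅g₁ * g₂, n⁆ = ⁅g₁, n⁆ * ⁅g₂, n⁆) ∧
    (∀ g : G, ∀ n₁ ∈ N', ∀ n₂ ∈ N', ⁅g, n₁ * n₂⁆ = ⁅g, n₁⁆ * ⁅g, n₂⁆) ∧
    (∀ g : G, (∀ n ∈ N', ⁅g, n⁆ = 1) ↔ g ∈ Subgroup.centralizer (N' : Set G)) ∧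
    (∀ n ∈ N', ((∀ g : G, ⁅g, n⁆ = 1) ↔ n ∈ Subgroup.center G)) ∧
    (Subgroup.centralizer (N' : Set G)).index ≠ 0 ∧
    (Subgroup.center G).relIndex N' ≠ 0 ∧
    (∀ g₁ g₂ : G, ⁅g₁, g₂⁆ ∈ Subgroup.centralizer (N' : Set G)) ∧
    (∀ n₁ ∈ N', ∀ n₂ ∈ N', ⁅n₁, n₂⁆ ∈ Subgroup.center G) ∧
    (∀ g : G, g ^ Nat.card A ∈ Subgroup.centralizer (N' : Set G)) ∧
    (∀ n ∈ N', n ^ Nat.card A ∈ Subgroup.center G) ∧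
    (∀ f : ↥N' → ↥A, (∀ n₁ n₂ : ↥N', f (n₁ * n₂) = f n₁ * f n₂) →
      (∀ n : ↥N', (n : G) ∈ Subgroup.center G → f n = 1) →
      ∃ g : G, ∀ n : ↥N', ((f n : G) = ⁅g, (n : G)⁆)) := by
  haveI := hfin
  haveI := hsp.normal
  haveI := hsp.finiteIndex
  -- basic facts
  have hAin : ∀ g n : G, n ∈ N → ⁅g, n⁆ ∈ A := by
    intro g n hn
    have h := A.inv_mem (hsp.comm_mem n hn g)
    rwa [commutatorElement_inv] at h
  have hcen : ∀ g n : G, n ∈ N → ∀ x : G, x * ⁅g, n⁆ = ⁅g, n⁆ * x := fun g n hn =>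
    Subgroup.mem_center_iff.mp (hA (hAin g n hn))
  have hmulL : ∀ g₁ g₂ n : G, n ∈ N → ⁅g₁ * g₂, n⁆ = ⁅g₁, n⁆ * ⁅g₂, n⁆ := fun g₁ g₂ n hn =>
    comm_mul_aux g₁ g₂ n (hcen g₂ n hn) (hcen g₁ n hn)
  have hcenR : ∀ n g : G, n ∈ N → ∀ x : G, x * ⁅n, g⁆ = ⁅n, g⁆ * x := fun n g hn =>
    Subgroup.mem_center_iff.mp (hA (hsp.comm_mem n hn g))
  have hmulR : ∀ g n₁ n₂ : G, n₁ ∈ N → n₂ ∈ N → ⁅g, n₁ * n₂⁆ = ⁅g, n₁⁆ * ⁅g, n₂⁆ := by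
    intro g n₁ n₂ hn₁ hn₂
    have h1 : ⁅n₁ * n₂, g⁆ = ⁅n₁, g⁆ * ⁅n₂, g⁆ :=
      comm_mul_aux n₁ n₂ g (hcenR n₂ g hn₂) (hcenR n₁ g hn₁)
    calc ⁅g, n₁ * n₂⁆ = ⁅n₁ * n₂, g⁆⁻¹ := (commutatorElement_inv (n₁ * n₂) g).symm
    _ = ⁅n₂, g⁆⁻¹ * ⁅n₁, g⁆⁻¹ := by rw [h1, mul_inv_rev]
    _ = ⁅g, n₂⁆ * ⁅g, n₁⁆ := by rw [commutatorElement_inv, commutatorElement_inv]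
    _ = ⁅g, n₁⁆ * ⁅g, n₂⁆ := hcen g n₁ hn₁ _
  have hinvL : ∀ g n : G, n ∈ N → ⁅g⁻¹, n⁆ = ⁅g, n⁆⁻¹ := by
    intro g n hn
    have h : ⁅g, n⁆ * ⁅g⁻¹, n⁆ = 1 := by
      rw [← hmulL g g⁻¹ n hn, mul_inv_cancel]
      simp [commutatorElement_def]
    exact (inv_eq_of_mul_eq_one_right h).symm
  have hinvR : ∀ g n : G, n ∈ N → ⁅g, n⁻¹⁆ = ⁅g, n⁆⁻¹ := by
    intro g n hn
    have h : ⁅g, n⁆ * ⁅g, n⁻¹⁆ = 1 := by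
      rw [← hmulR g n n⁻¹ hn (N.inv_mem hn), mul_inv_cancel]
      simp [commutatorElement_def]
    exact (inv_eq_of_mul_eq_one_right h).symm
  have hpowL : ∀ (k : ℕ) (g n : G), n ∈ N → ⁅g ^ k, n⁆ = ⁅g, n⁆ ^ k := by
    intro k g n hn
    induction k with
    | zero => simp [commutatorElement_def]
    | succ k ih => rw [pow_succ, pow_succ, hmulL _ _ _ hn, ih]
  have hpowR : ∀ (k : ℕ) (g n : G), n ∈ N → ⁅g, n ^ k⁆ = ⁅g, n⁆ ^ k := by
    intro k g n hn
    induction k with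
    | zero => simp [commutatorElement_def]
    | succ k ih => rw [pow_succ, pow_succ, hmulR _ _ _ (N.pow_mem hn k) hn, ih]
  -- the items
  have I4 : ∀ g : G, (∀ n ∈ N', ⁅g, n⁆ = 1) ↔ g ∈ Subgroup.centralizer (N' : Set G) := by
    intro g
    constructor
    · intro h
      exact Subgroup.mem_centralizer_iff.mpr fun n hn =>
        ((commutatorElement_eq_one_iff_commute.mp (h n hn)).symm).eq
    · intro hg n hn
      exact commutatorElement_eq_one_iff_commute.mpr
        ((Commute.symm (Subgroup.mem_centralizer_iff.mp hg n hn)))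
  have I5 : ∀ n ∈ N', ((∀ g : G, ⁅g, n⁆ = 1) ↔ n ∈ Subgroup.center G) := by
    intro n _
    constructor
    · intro h
      exact Subgroup.mem_center_iff.mpr fun g => (commutatorElement_eq_one_iff_commute.mp (h g)).eq
    · intro hn g
      exact commutatorElement_eq_one_iff_commute.mpr (Subgroup.mem_center_iff.mp hn g)
  have hHle : H ≤ Subgroup.centralizer (N' : Set G) := by
    intro h hh
    exact Subgroup.mem_centralizer_iff.mpr fun n hn => (hsp.commute n (hN' hn) h hh).eq
  have I6 : (Subgroup.centralizer (N' : Set G)).index ≠ 0 := by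
    intro h0
    exact hsp.finiteIndex.index_ne_zero
      (Nat.eq_zero_of_zero_dvd (h0 ▸ Subgroup.index_dvd_of_le hHle))
  have I8 : ∀ g₁ g₂ : G, ⁅g₁, g₂⁆ ∈ Subgroup.centralizer (N' : Set G) := by
    intro g₁ g₂
    refine (I4 _).mp fun n hn => ?_
    have hn' := hN' hn
    have e : ⁅g₁, g₂⁆ = (g₁ * g₂) * (g₂ * g₁)⁻¹ := by group
    rw [e, hmulL _ _ _ hn', hinvL _ _ hn', hmulL _ _ _ hn', hmulL _ _ _ hn',
      hcen g₂ n hn' ⁅g₁, n⁆, mul_inv_cancel]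
  have I9 : ∀ n₁ ∈ N', ∀ n₂ ∈ N', ⁅n₁, n₂⁆ ∈ Subgroup.center G := fun n₁ hn₁ n₂ _ =>
    hA (hsp.comm_mem n₁ (hN' hn₁) n₂)
  have hApow : ∀ a : G, (ha : a ∈ A) → a ^ Nat.card A = 1 := by
    intro a ha
    have : ((⟨a, ha⟩ : A) : G) ^ Nat.card A = 1 := by
      rw [← SubgroupClass.coe_pow, pow_card_eq_one']
      rfl
    simpa using this
  have I10 : ∀ g : G, g ^ Nat.card A ∈ Subgroup.centralizer (N' : Set G) := by
    intro g
    refine (I4 _).mp fun n hn => ?_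
    rw [hpowL _ _ _ (hN' hn)]
    exact hApow _ (hAin g n (hN' hn))
  have I11 : ∀ n ∈ N', n ^ Nat.card A ∈ Subgroup.center G := by
    intro n hn
    refine (I5 _ (N'.pow_mem hn _)).mp fun g => ?_
    rw [hpowR _ _ _ (hN' hn)]
    exact hApow _ (hAin g n (hN' hn))
  -- finiteness of N' / (center ∩ N')
  have hKdef : ∀ x : ↥N', x ∈ (Subgroup.center G).subgroupOf N' ↔ (x : G) ∈ Subgroup.center G :=
    fun x => Subgroup.mem_subgroupOf
  set K : Subgroup ↥N' := (Subgroup.center G).subgroupOf N' with hK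
  have hcongr : ∀ (n₁ n₂ : ↥N'), ((n₁⁻¹ * n₂ : ↥N') : G) ∈ Subgroup.center G →
      ∀ g : G, ⁅g, (n₁ : G)⁆ = ⁅g, (n₂ : G)⁆ := by
    intro n₁ n₂ hz g
    have e : (n₂ : G) = (n₁ : G) * ((n₁⁻¹ * n₂ : ↥N') : G) := by
      push_cast; group
    rw [e, hmulR _ _ _ (hN' n₁.2) (hN' (n₁⁻¹ * n₂).2),
      commutatorElement_eq_one_iff_commute.mpr (Subgroup.mem_center_iff.mp hz g), mul_one]
  have hFwd : ∀ (n : ↥N') (a b : G), @Setoid.r _ (QuotientGroup.leftRel H) a b →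
      (⟨⁅a, (n : G)⁆, hAin _ _ (hN' n.2)⟩ : ↥A) = ⟨⁅b, (n : G)⁆, hAin _ _ (hN' n.2)⟩ := by
    intro n a b hab
    have hab' : a⁻¹ * b ∈ H := QuotientGroup.leftRel_apply.mp hab
    refine Subtype.ext ?_
    show ⁅a, (n : G)⁆ = ⁅b, (n : G)⁆
    have e : b = a * (a⁻¹ * b) := by group
    rw [e, hmulL _ _ _ (hN' n.2),
      commutatorElement_eq_one_iff_commute.mpr ((hsp.commute _ (hN' n.2) _ hab').symm), mul_one]
  let F : (↥N' ⧸ K) → (G ⧸ H → ↥A) := fun x =>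
    Quotient.liftOn' x
      (fun n => fun y => Quotient.liftOn' y
        (fun g => (⟨⁅g, (n : G)⁆, hAin _ _ (hN' n.2)⟩ : ↥A)) (hFwd n))
      (by
        intro n₁ n₂ h
        have hz : ((n₁⁻¹ * n₂ : ↥N') : G) ∈ Subgroup.center G :=
          (hKdef _).mp (QuotientGroup.leftRel_apply.mp h)
        funext y
        refine Quotient.inductionOn' y fun g => ?_
        exact Subtype.ext (hcongr n₁ n₂ hz g))
  have hFinj : Function.Injective F := by
    intro x y
    refine Quotient.inductionOn₂' x y fun a b hab => ?_
    refine Quotient.sound' (QuotientGroup.leftRel_apply.mpr ((hKdef _).mpr ?_))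
    refine Subgroup.mem_center_iff.mpr fun g => ?_
    have h1 : ⁅g, (a : G)⁆ = ⁅g, (b : G)⁆ := by
      have := congrFun hab (QuotientGroup.mk g)
      exact congrArg Subtype.val this
    have h2 : ⁅g, ((a⁻¹ * b : ↥N') : G)⁆ = 1 := by
      have e : ((a⁻¹ * b : ↥N') : G) = (a : G)⁻¹ * (b : G) := by norm_cast
      rw [e, hmulR _ _ _ (N.inv_mem (hN' a.2)) (hN' b.2), hinvR _ _ (hN' a.2), h1,
        inv_mul_cancel]
    exact (commutatorElement_eq_one_iff_commute.mp h2).eq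
  haveI hCfin : Finite (↥N' ⧸ K) := Finite.of_injective F hFinj
  have I7 : (Subgroup.center G).relIndex N' ≠ 0 := Subgroup.index_ne_zero_of_finite
  -- Part 12
  refine ⟨fun g n hn => hAin g n (hN' hn), fun g₁ g₂ n hn => hmulL g₁ g₂ n (hN' hn),
    fun g n₁ hn₁ n₂ hn₂ => hmulR g n₁ n₂ (hN' hn₁) (hN' hn₂), I4, I5, I6, I7, I8, I9, I10, I11,
    ?_⟩
  intro f hfmul hfker
  set Z := Subgroup.centralizer (N' : Set G) with hZdef
  haveI hZn : Z.Normal := by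
    constructor
    intro x hx g
    refine (I4 _).mp fun n hn => ?_
    have e : g * x * g⁻¹ = ⁅g, x⁆ * x := by group
    rw [e, hmulL _ _ _ (hN' hn), (I4 _).mpr (I8 g x) n hn, (I4 _).mpr hx n hn, mul_one]
  haveI : Z.FiniteIndex := ⟨I6⟩
  letI : CommGroup (G ⧸ Z) :=
    { (inferInstance : Group (G ⧸ Z)) with
      mul_comm := by
        intro a b
        refine QuotientGroup.induction_on a fun g₁ => ?_
        refine QuotientGroup.induction_on b fun g₂ => ?_
        rw [← QuotientGroup.mk_mul, ← QuotientGroup.mk_mul, QuotientGroup.eq]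
        have e : (g₁ * g₂)⁻¹ * (g₂ * g₁) = ⁅g₂⁻¹, g₁⁻¹⁆ := by
          simp only [commutatorElement_def]; group
        rw [e]
        exact I8 _ _ }
  haveI hKn : K.Normal := by
    constructor
    intro x hx g
    rw [hKdef] at hx ⊢
    have hcomm := Subgroup.mem_center_iff.mp hx (g : G)
    have e : ((g * x * g⁻¹ : ↥N') : G) = (x : G) := by
      push_cast
      rw [hcomm, mul_inv_cancel_right]
    rw [e]
    exact hx
  letI : CommGroup (↥N' ⧸ K) :=
    { (inferInstance : Group (↥N' ⧸ K)) with
      mul_comm := by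
        intro a b
        refine QuotientGroup.induction_on a fun n₁ => ?_
        refine QuotientGroup.induction_on b fun n₂ => ?_
        rw [← QuotientGroup.mk_mul, ← QuotientGroup.mk_mul, QuotientGroup.eq, hKdef]
        have e : (((n₁ * n₂)⁻¹ * (n₂ * n₁) : ↥N') : G) = ⁅(n₂ : G)⁻¹, (n₁ : G)⁻¹⁆ := by
          simp only [commutatorElement_def]
          push_cast
          group
        rw [e]
        exact hA (hsp.comm_mem _ (N.inv_mem (hN' n₂.2)) _) }
  have hexpB : Monoid.exponent (G ⧸ Z) ∣ Nat.card ↥A := by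
    refine Monoid.exponent_dvd_of_forall_pow_eq_one fun b => ?_
    refine QuotientGroup.induction_on b fun g => ?_
    show (QuotientGroup.mk' Z) g ^ Nat.card ↥A = 1
    rw [← map_pow]
    exact (QuotientGroup.eq_one_iff _).mpr (I10 g)
  have hexpC : Monoid.exponent (↥N' ⧸ K) ∣ Nat.card ↥A := by
    refine Monoid.exponent_dvd_of_forall_pow_eq_one fun c => ?_
    refine QuotientGroup.induction_on c fun n => ?_
    show (QuotientGroup.mk' K) n ^ Nat.card ↥A = 1
    rw [← map_pow]
    refine (QuotientGroup.eq_one_iff _).mpr ?_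
    rw [hKdef]
    have e : ((n ^ Nat.card ↥A : ↥N') : G) = (n : G) ^ Nat.card ↥A := by push_cast; rfl
    rw [e]
    exact I11 _ n.2
  letI : CommGroup ↥A := IsCyclic.commGroup
  haveI : HasEnoughRootsOfUnity ↥A (Monoid.exponent (G ⧸ Z)) := hasEnough_of_cyclic hexpB
  haveI : HasEnoughRootsOfUnity ↥A (Monoid.exponent (↥N' ⧸ K)) := hasEnough_of_cyclic hexpC
  obtain ⟨eB⟩ := CommGroup.monoidHom_mulEquiv_of_hasEnoughRootsOfUnity (G ⧸ Z) ↥A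
  obtain ⟨eC⟩ := CommGroup.monoidHom_mulEquiv_of_hasEnoughRootsOfUnity (↥N' ⧸ K) ↥A
  let uB : ((G ⧸ Z) →* ↥A) ≃* ((G ⧸ Z) →* (↥A)ˣ) :=
    MulEquiv.monoidHomCongrRight toUnits
  let uC : ((↥N' ⧸ K) →* ↥A) ≃* ((↥N' ⧸ K) →* (↥A)ˣ) :=
    MulEquiv.monoidHomCongrRight toUnits
  have cB : Nat.card ((G ⧸ Z) →* ↥A) = Nat.card (G ⧸ Z) := Nat.card_congr (uB.trans eB).toEquiv
  have cC : Nat.card ((↥N' ⧸ K) →* ↥A) = Nat.card (↥N' ⧸ K) :=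
    Nat.card_congr (uC.trans eC).toEquiv
  haveI : Finite ((↥N' ⧸ K) →* ↥A) := Finite.of_equiv _ (uC.trans eC).toEquiv.symm
  haveI : Finite ((G ⧸ Z) →* ↥A) := Finite.of_equiv _ (uB.trans eB).toEquiv.symm
  -- the pairing homomorphisms
  have hval : ∀ (g : G) (n : ↥N'), ⁅g, (n : G)⁆ ∈ A := fun g n => hAin _ _ (hN' n.2)
  let χ₀ : G → (↥N' →* ↥A) := fun g =>
    MonoidHom.mk' (fun n => ⟨⁅g, (n : G)⁆, hval g n⟩)
      (fun n₁ n₂ => Subtype.ext (hmulR g _ _ (hN' n₁.2) (hN' n₂.2)))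
  let χ : G → ((↥N' ⧸ K) →* ↥A) := fun g =>
    QuotientGroup.lift K (χ₀ g) (fun n hn => Subtype.ext
      (commutatorElement_eq_one_iff_commute.mpr
        (Subgroup.mem_center_iff.mp ((hKdef n).mp hn) g)))
  let Φ₀ : G →* ((↥N' ⧸ K) →* ↥A) := MonoidHom.mk' χ (by
    intro g₁ g₂
    refine MonoidHom.ext fun c => ?_
    refine QuotientGroup.induction_on c fun n => ?_
    exact Subtype.ext (hmulL g₁ g₂ _ (hN' n.2)))
  have hΦ₀Z : ∀ g ∈ Z, Φ₀ g = 1 := by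
    intro g hg
    refine MonoidHom.ext fun c => ?_
    refine QuotientGroup.induction_on c fun n => ?_
    exact Subtype.ext ((I4 g).mpr hg _ n.2)
  let Φ : (G ⧸ Z) →* ((↥N' ⧸ K) →* ↥A) := QuotientGroup.lift Z Φ₀ hΦ₀Z
  have hΦinj : Function.Injective Φ := by
    refine (injective_iff_map_eq_one Φ).mpr fun b hb => ?_
    obtain ⟨g, rfl⟩ := QuotientGroup.mk_surjective b
    rw [QuotientGroup.eq_one_iff]
    refine (I4 g).mp fun n hn => ?_
    exact congrArg Subtype.val (DFunLike.congr_fun hb (QuotientGroup.mk (⟨n, hn⟩ : ↥N')))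
  let ψ₀ : ↥N' → (G →* ↥A) := fun n => MonoidHom.mk' (fun g => ⟨⁅g, (n : G)⁆, hval g n⟩)
    (fun g₁ g₂ => Subtype.ext (hmulL g₁ g₂ _ (hN' n.2)))
  let ψ : ↥N' → ((G ⧸ Z) →* ↥A) := fun n => QuotientGroup.lift Z (ψ₀ n)
    (fun g hg => Subtype.ext ((I4 g).mpr hg _ n.2))
  let Ψ₀ : ↥N' →* ((G ⧸ Z) →* ↥A) := MonoidHom.mk' ψ (by
    intro n₁ n₂
    refine MonoidHom.ext fun b => ?_
    refine QuotientGroup.induction_on b fun g => ?_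
    exact Subtype.ext (hmulR g _ _ (hN' n₁.2) (hN' n₂.2)))
  let Ψ : (↥N' ⧸ K) →* ((G ⧸ Z) →* ↥A) := QuotientGroup.lift K Ψ₀ (by
    intro n hn
    refine MonoidHom.ext fun b => ?_
    refine QuotientGroup.induction_on b fun g => ?_
    exact Subtype.ext (commutatorElement_eq_one_iff_commute.mpr
      (Subgroup.mem_center_iff.mp ((hKdef n).mp hn) g)))
  have hΨinj : Function.Injective Ψ := by
    refine (injective_iff_map_eq_one Ψ).mpr fun c hc => ?_
    obtain ⟨n, rfl⟩ := QuotientGroup.mk_surjective c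
    rw [QuotientGroup.eq_one_iff, hKdef]
    refine Subgroup.mem_center_iff.mpr fun g => ?_
    have h1 : ⁅g, (n : G)⁆ = 1 :=
      congrArg Subtype.val (DFunLike.congr_fun hc ((g : G ⧸ Z)))
    exact (commutatorElement_eq_one_iff_commute.mp h1).eq
  have c1 : Nat.card (G ⧸ Z) ≤ Nat.card ((↥N' ⧸ K) →* ↥A) :=
    Nat.card_le_card_of_injective Φ hΦinj
  have c3 : Nat.card (↥N' ⧸ K) ≤ Nat.card ((G ⧸ Z) →* ↥A) :=
    Nat.card_le_card_of_injective Ψ hΨinj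
  have hcard : Nat.card (G ⧸ Z) = Nat.card ((↥N' ⧸ K) →* ↥A) := by
    refine le_antisymm c1 ?_
    rw [cC]
    calc Nat.card (↥N' ⧸ K) ≤ Nat.card ((G ⧸ Z) →* ↥A) := c3
    _ = Nat.card (G ⧸ Z) := cB
  have hΦsurj : Function.Surjective Φ :=
    ((Nat.bijective_iff_injective_and_card Φ).mpr ⟨hΦinj, hcard⟩).surjective
  let fbar : (↥N' ⧸ K) →* ↥A := QuotientGroup.lift K (MonoidHom.mk' f hfmul)
    (fun n hn => hfker n ((hKdef n).mp hn))
  obtain ⟨b, hb⟩ := hΦsurj fbar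
  obtain ⟨g, rfl⟩ := QuotientGroup.mk_surjective b
  refine ⟨g, fun n => ?_⟩
  exact (congrArg Subtype.val (DFunLike.congr_fun hb (QuotientGroup.mk n))).symm
end

section
/- Let G be a group, A a finite cyclic subgroup of the center of G, and (H,N) a special pair in G. Let N' be a subgroup with N∩H ≤ N' ≤ N. Then Z_G(N') = Z_N(N')·H. In particular: Z_G(Z(N)) = NH; Z_G(N) = Z(N)·H = (N∩Z(G))·H; Z(N) = (N∩Z(G))·(N∩H); and Z(G) = (N∩Z(G))·(H∩Z(G)). -/
open Subgroup Pointwise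
open scoped commutatorElement


private lemma card_monoidHom_cyclic_le (n : ℕ) (hn : 0 < n) (A : Type*) [CommGroup A]
    [Finite A] [IsCyclic A] :
    Nat.card (Multiplicative (ZMod n) →* A) ≤ n := by
  classical
  haveI : NeZero n := ⟨hn.ne'⟩
  haveI : Fintype A := Fintype.ofFinite A
  have hinj : Function.Injective
      (fun φ : Multiplicative (ZMod n) →* A =>
        (⟨φ (Multiplicative.ofAdd 1), by
          rw [← map_pow, ← ofAdd_nsmul]
          simp⟩ : {a : A // a ^ n = 1})) := by
    intro φ ψ h
    have h' : φ (Multiplicative.ofAdd 1) = ψ (Multiplicative.ofAdd 1) :=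
      congrArg Subtype.val h
    refine MonoidHom.ext fun x => ?_
    have hx : x = (Multiplicative.ofAdd (1 : ZMod n)) ^ (Multiplicative.toAdd x).val := by
      rw [← ofAdd_nsmul, nsmul_eq_mul, mul_one]
      simp [ZMod.natCast_val, ZMod.cast_id]
    rw [hx, map_pow, map_pow, h']
  calc Nat.card (Multiplicative (ZMod n) →* A)
      ≤ Nat.card {a : A // a ^ n = 1} := Nat.card_le_card_of_injective _ hinj
    _ ≤ n := by
        rw [Nat.card_eq_fintype_card, Fintype.card_subtype]
        exact IsCyclic.card_pow_eq_one_le hn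

private lemma card_monoidHom_le_comm (X A : Type*) [CommGroup X] [Finite X] [CommGroup A]
    [Finite A] [IsCyclic A] : Nat.card (X →* A) ≤ Nat.card X := by
  classical
  obtain ⟨ι, hι, n, hn, ⟨e⟩⟩ := CommGroup.equiv_prod_multiplicative_zmod_of_finite X
  calc Nat.card (X →* A)
      = Nat.card (((i : ι) → Multiplicative (ZMod (n i))) →* A) :=
        Nat.card_congr (MulEquiv.monoidHomCongrLeftEquiv e)
    _ = Nat.card ((i : ι) → (Multiplicative (ZMod (n i)) →* A)) :=
        Nat.card_congr (Pi.monoidHomMulEquiv _ _).toEquiv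
    _ = ∏ i, Nat.card (Multiplicative (ZMod (n i)) →* A) := Nat.card_pi
    _ ≤ ∏ i, Nat.card (Multiplicative (ZMod (n i))) := by
        refine Finset.prod_le_prod' fun i _ => ?_
        have : Nat.card (Multiplicative (ZMod (n i))) = n i := by
          simp [Nat.card_congr (Multiplicative.toAdd (α := ZMod (n i))), Nat.card_zmod]
        rw [this]
        exact card_monoidHom_cyclic_le (n i) (Nat.zero_lt_one.trans (hn i)) A
    _ = Nat.card ((i : ι) → Multiplicative (ZMod (n i))) := Nat.card_pi.symm
    _ = Nat.card X := (Nat.card_congr e.toEquiv).symm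

private lemma card_monoidHom_le (X A : Type*) [Group X] [Finite X] [CommGroup A]
    [Finite A] [IsCyclic A] : Nat.card (X →* A) ≤ Nat.card X := by
  haveI : Finite (Abelianization X) := Quotient.finite _
  calc Nat.card (X →* A) = Nat.card (Abelianization X →* A) :=
        Nat.card_congr Abelianization.lift
    _ ≤ Nat.card (Abelianization X) := card_monoidHom_le_comm _ _
    _ ≤ Nat.card X := Nat.card_le_card_of_surjective _ (fun q => Quotient.exists_rep q)

private lemma subgroup_hom_eq_top {Q A : Type*} [Group Q] [Finite Q] [CommGroup A] [Finite A]
    [IsCyclic A] (B : Subgroup (Q →* A)) (hnd : ∀ q : Q, q ≠ 1 → ∃ φ ∈ B, φ q ≠ 1) :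
    B = ⊤ := by
  haveI : Finite (Q →* A) := Finite.of_injective _ DFunLike.coe_injective
  haveI : Finite (↥B →* A) := Finite.of_injective _ DFunLike.coe_injective
  let ev : Q →* (↥B →* A) :=
    { toFun := fun q =>
        { toFun := fun b => b.1 q
          map_one' := rfl
          map_mul' := fun b b' => rfl }
      map_one' := by ext b; simp
      map_mul' := fun q q' => by ext b; simp }
  have hinj : Function.Injective ev := by
    rw [← MonoidHom.ker_eq_bot_iff]
    rw [Subgroup.eq_bot_iff_forall]
    intro q hq
    by_contra hq1
    obtain ⟨φ, hφB, hφq⟩ := hnd q hq1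
    have := DFunLike.congr_fun hq ⟨φ, hφB⟩
    exact hφq this
  have h1 : Nat.card Q ≤ Nat.card (↥B →* A) := Nat.card_le_card_of_injective ev hinj
  have h2 : Nat.card (↥B →* A) ≤ Nat.card ↥B := card_monoidHom_le _ _
  have h3 : Nat.card ↥B ≤ Nat.card (Q →* A) := Nat.card_le_card_of_injective _ Subtype.coe_injective
  have h4 : Nat.card (Q →* A) ≤ Nat.card Q := card_monoidHom_le _ _
  exact Subgroup.eq_top_of_card_eq B (le_antisymm h3 (by omega))


private lemma comm_aux_right {G : Type*} [Group G] (x g g' : G)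
    (hc : ⁅x, g'⁆ ∈ Subgroup.center G) : ⁅x, g * g'⁆ = ⁅x, g⁆ * ⁅x, g'⁆ := by
  have h1 : ⁅x, g * g'⁆ = ⁅x, g⁆ * (g * ⁅x, g'⁆ * g⁻¹) := by group
  have h2 : g * ⁅x, g'⁆ * g⁻¹ = ⁅x, g'⁆ := by
    rw [Subgroup.mem_center_iff.mp hc g, mul_assoc]; simp
  rw [h1, h2]

private lemma comm_aux_left {G : Type*} [Group G] (x y g : G)
    (hc : ⁅y, g⁆ ∈ Subgroup.center G) : ⁅x * y, g⁆ = ⁅x, g⁆ * ⁅y, g⁆ := by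
  have h1 : ⁅x * y, g⁆ = (x * ⁅y, g⁆ * x⁻¹) * ⁅x, g⁆ := by group
  have h2 : x * ⁅y, g⁆ * x⁻¹ = ⁅y, g⁆ := by
    rw [Subgroup.mem_center_iff.mp hc x, mul_assoc]; simp
  rw [h1, h2, Subgroup.mem_center_iff.mp hc ⁅x, g⁆]

private lemma center_aux {G : Type*} [Group G] {z d : G}
    (h : ∀ g : G, ⁅d, g⁆ = ⁅z, g⁆) : d⁻¹ * z ∈ Subgroup.center G := by
  rw [Subgroup.mem_center_iff]
  intro g
  have E := h g
  simp only [commutatorElement_def] at E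
  have E2 : d * g * d⁻¹ = z * g * z⁻¹ := mul_right_cancel E
  have h4 := congrArg (fun w => d⁻¹ * (w * z)) E2
  simpa [mul_assoc] using h4

private def pairHom {G : Type*} [Group G] (A K : Subgroup G) [K.Normal]
    (hAc : A ≤ Subgroup.center G) (x : G) (h1 : ∀ g : G, ⁅x, g⁆ ∈ A)
    (h2 : ∀ k ∈ K, ⁅x, k⁆ = 1) : (G ⧸ K) →* A :=
  QuotientGroup.lift K
    { toFun := fun g => ⟨⁅x, g⁆, h1 g⟩
      map_one' := Subtype.ext (by simp)
      map_mul' := fun g g' => Subtype.ext (comm_aux_right x g g' (hAc (h1 g'))) }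
    (fun k hk => by exact Subtype.ext (h2 k hk))

private lemma pairHom_apply {G : Type*} [Group G] (A K : Subgroup G) [K.Normal]
    (hAc : A ≤ Subgroup.center G) (x : G) (h1 : ∀ g : G, ⁅x, g⁆ ∈ A)
    (h2 : ∀ k ∈ K, ⁅x, k⁆ = 1) (g : G) :
    (pairHom A K hAc x h1 h2 (QuotientGroup.mk g) : G) = ⁅x, g⁆ := rfl

/-- For a special pair `(H, N)` in `G` and a subgroup `N'` with
`N ∩ H ≤ N' ≤ N`, one has `Z_G(N') = Z_N(N')·H`. In particular `Z_G(Z(N)) = NH`,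
`Z_G(N) = Z(N)·H = (N ∩ Z(G))·H`, `Z(N) = (N ∩ Z(G))·(N ∩ H)` and
`Z(G) = (N ∩ Z(G))·(H ∩ Z(G))`. -/
theorem stmt_9 {G : Type*} [Group G] (A H N : Subgroup G)
    (hA : A ≤ Subgroup.center G) (hcyc : IsCyclic A) (hfin : Finite A)
    (hsp : IsSpecialPair A H N)
    (N' : Subgroup G) (hNH : H ⊓ N ≤ N') (hN'N : N' ≤ N) :
    (Subgroup.centralizer (N' : Set G) =
      (N ⊓ Subgroup.centralizer (N' : Set G)) ⊔ H) ∧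
    (Subgroup.centralizer ((N ⊓ Subgroup.centralizer (N : Set G) : Subgroup G) : Set G) =
      N ⊔ H) ∧
    (Subgroup.centralizer (N : Set G) = (N ⊓ Subgroup.centralizer (N : Set G)) ⊔ H) ∧
    (Subgroup.centralizer (N : Set G) = (N ⊓ Subgroup.center G) ⊔ H) ∧
    (N ⊓ Subgroup.centralizer (N : Set G) = (N ⊓ Subgroup.center G) ⊔ (N ⊓ H)) ∧
    (Subgroup.center G = (N ⊓ Subgroup.center G) ⊔ (H ⊓ Subgroup.center G)) := by
  obtain ⟨hAH, hAN, hHnorm, hHfin, hcommute, hcm, hcent⟩ := hsp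
  haveI := hHnorm
  haveI := hHfin
  haveI := hcyc
  haveI := hfin
  haveI hNnorm : N.Normal := by
    constructor
    intro n hn g
    have h1 : ⁅g, n⁆ ∈ A := by
      rw [← commutatorElement_inv]
      exact A.inv_mem (hcm n hn g)
    have h2 : g * n * g⁻¹ = ⁅g, n⁆ * n := by group
    rw [h2]; exact N.mul_mem (hAN h1) hn
  haveI hKnorm : (N ⊔ H).Normal := Subgroup.sup_normal N H
  haveI : (N ⊔ H).FiniteIndex := Subgroup.finiteIndex_of_le le_sup_right
  haveI : Finite (G ⧸ (N ⊔ H)) := inferInstance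
  letI : CommGroup A := { A.toGroup with mul_comm := fun a b => Subtype.ext (Subgroup.mem_center_iff.mp (hA b.2) a) }
  -- elements of H centralize N
  have hHcent : ∀ {h : G}, h ∈ H → h ∈ Subgroup.centralizer (N : Set G) := fun {h} hh =>
    Subgroup.mem_centralizer_iff.mpr fun y hy => hcommute y hy h hh
  -- Part 1 (general form)
  have part1 : ∀ (N'' : Subgroup G), H ⊓ N ≤ N'' → N'' ≤ N →
      Subgroup.centralizer (N'' : Set G) =
        (N ⊓ Subgroup.centralizer (N'' : Set G)) ⊔ H := by
    intro N'' hle hle2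
    apply le_antisymm
    · intro g hg
      have hgK : g ∈ N ⊔ H := by
        rw [← hcent]
        exact Subgroup.centralizer_le (SetLike.coe_subset_coe.mpr hle) hg
      have hgm : g ∈ ((N : Set G) * (H : Set G)) := by
        rw [← Subgroup.mul_normal N H]; exact hgK
      obtain ⟨n, hn, h, hh, hg_eq⟩ := Set.mem_mul.mp hgm
      have hhC : h ∈ Subgroup.centralizer (N'' : Set G) :=
        Subgroup.mem_centralizer_iff.mpr fun y hy => hcommute y (hle2 hy) h hh
      have hnC : n ∈ Subgroup.centralizer (N'' : Set G) := by
        have hne : n = g * h⁻¹ := by rw [← hg_eq]; group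
        rw [hne]; exact mul_mem hg (inv_mem hhC)
      rw [← hg_eq]
      exact mul_mem (Subgroup.mem_sup_left (Subgroup.mem_inf.mpr ⟨hn, hnC⟩))
        (Subgroup.mem_sup_right hh)
    · exact sup_le inf_le_right fun h hh =>
        Subgroup.mem_centralizer_iff.mpr fun y hy => hcommute y (hle2 hy) h hh
  -- Part 2
  have part2 : Subgroup.centralizer
      ((N ⊓ Subgroup.centralizer (N : Set G) : Subgroup G) : Set G) = N ⊔ H := by
    have hle1 : H ⊓ N ≤ N ⊓ Subgroup.centralizer (N : Set G) :=
      le_inf inf_le_right fun x hx => hHcent hx.1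
    have h2 := part1 (N ⊓ Subgroup.centralizer (N : Set G)) hle1 inf_le_left
    have hNc : N ≤ Subgroup.centralizer
        ((N ⊓ Subgroup.centralizer (N : Set G) : Subgroup G) : Set G) := fun n hn =>
      Subgroup.mem_centralizer_iff.mpr fun y hy =>
        (Subgroup.mem_centralizer_iff.mp hy.2 n hn).symm
    have heq : N ⊓ Subgroup.centralizer
        ((N ⊓ Subgroup.centralizer (N : Set G) : Subgroup G) : Set G) = N :=
      le_antisymm inf_le_left (le_inf le_rfl hNc)
    rw [h2, heq]
  -- the kernel property for the pairing
  have hker : ∀ x : G, x ∈ N → x ∈ Subgroup.centralizer (N : Set G) →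
      ∀ k ∈ N ⊔ H, ⁅x, k⁆ = 1 := by
    intro x hxN hxC k hk
    have hle : N ⊔ H ≤ Subgroup.centralizer {x} := by
      refine sup_le (fun n hn => ?_) (fun h hh => ?_)
      · exact Subgroup.mem_centralizer_singleton_iff.mpr
          (Subgroup.mem_centralizer_iff.mp hxC n hn)
      · exact Subgroup.mem_centralizer_singleton_iff.mpr (hcommute x hxN h hh).symm
    exact commutatorElement_eq_one_iff_commute.mpr
      (Subgroup.mem_centralizer_singleton_iff.mp (hle hk)).symm
  -- Part 5 hard inclusion
  have part5le : N ⊓ Subgroup.centralizer (N : Set G) ≤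
      (N ⊓ Subgroup.center G) ⊔ (N ⊓ H) := by
    -- build the homomorphism Ψ from D = H ⊓ N
    have h1D : ∀ d : ↥(H ⊓ N), ∀ g : G, ⁅(d : G), g⁆ ∈ A := fun d g => hcm d d.2.2 g
    have h2D : ∀ d : ↥(H ⊓ N), ∀ k ∈ N ⊔ H, ⁅(d : G), k⁆ = 1 := fun d =>
      hker d d.2.2 (hHcent d.2.1)
    let Ψ : ↥(H ⊓ N) →* ((G ⧸ (N ⊔ H)) →* ↥A) :=
      { toFun := fun d => pairHom A (N ⊔ H) hA (d : G) (h1D d) (h2D d)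
        map_one' := by
          refine MonoidHom.ext fun q => ?_
          induction q using QuotientGroup.induction_on with
          | H g =>
            refine Subtype.ext ?_
            rw [pairHom_apply]
            simp
        map_mul' := fun d d' => by
          refine MonoidHom.ext fun q => ?_
          induction q using QuotientGroup.induction_on with
          | H g =>
            refine Subtype.ext ?_
            rw [MonoidHom.mul_apply]
            push_cast [pairHom_apply]
            exact comm_aux_left (d : G) (d' : G) g (hA (h1D d' g)) }
    have hBtop : Ψ.range = ⊤ := by
      apply subgroup_hom_eq_top
      intro q hq
      induction q using QuotientGroup.induction_on with
      | H g =>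
        have hgK : g ∉ N ⊔ H := fun hgK => hq ((QuotientGroup.eq_one_iff g).mpr hgK)
        have hgC : g ∉ Subgroup.centralizer ((H ⊓ N : Subgroup G) : Set G) := by
          rw [hcent]; exact hgK
        rw [Subgroup.mem_centralizer_iff] at hgC
        push_neg at hgC
        obtain ⟨d, hd, hdg⟩ := hgC
        refine ⟨Ψ ⟨d, hd⟩, ⟨⟨d, hd⟩, rfl⟩, ?_⟩
        intro h1
        have h2 : ⁅d, g⁆ = 1 := by
          have h3 := congrArg Subtype.val h1
          simp only [Ψ, MonoidHom.coe_mk, OneHom.coe_mk] at h3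
          rwa [pairHom_apply] at h3
        exact hdg (commutatorElement_eq_one_iff_commute.mp h2)
    intro z hz
    -- the homomorphism attached to z
    have h1z : ∀ g : G, ⁅z, g⁆ ∈ A := fun g => hcm z hz.1 g
    have h2z : ∀ k ∈ N ⊔ H, ⁅z, k⁆ = 1 := hker z hz.1 hz.2
    have hmem : pairHom A (N ⊔ H) hA z h1z h2z ∈ Ψ.range := by rw [hBtop]; trivial
    obtain ⟨d, hd⟩ := hmem
    have key : ∀ g : G, ⁅(d : G), g⁆ = ⁅z, g⁆ := by
      intro g
      have h3 := congrArg Subtype.val (DFunLike.congr_fun hd (QuotientGroup.mk g))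
      simp only [Ψ, MonoidHom.coe_mk, OneHom.coe_mk] at h3
      rwa [pairHom_apply, pairHom_apply] at h3
    have hcz : (d : G)⁻¹ * z ∈ Subgroup.center G := center_aux key
    have hzd : z = (d : G) * ((d : G)⁻¹ * z) := by group
    rw [hzd]
    exact mul_mem (Subgroup.mem_sup_right (Subgroup.mem_inf.mpr ⟨d.2.2, d.2.1⟩))
      (Subgroup.mem_sup_left (Subgroup.mem_inf.mpr
        ⟨N.mul_mem (N.inv_mem d.2.2) hz.1, hcz⟩))
  have part5 : N ⊓ Subgroup.centralizer (N : Set G) =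
      (N ⊓ Subgroup.center G) ⊔ (N ⊓ H) := by
    refine le_antisymm part5le (sup_le (le_inf inf_le_left ?_) (le_inf inf_le_left ?_))
    · exact fun x hx => Subgroup.center_le_centralizer (N : Set G) hx.2
    · exact fun x hx => hHcent hx.2
  have part3 := part1 N inf_le_right le_rfl
  have part4 : Subgroup.centralizer (N : Set G) = (N ⊓ Subgroup.center G) ⊔ H := by
    rw [part3, part5, sup_assoc, sup_eq_right.mpr (inf_le_right : N ⊓ H ≤ H)]
  have part6 : Subgroup.center G = (N ⊓ Subgroup.center G) ⊔ (H ⊓ Subgroup.center G) := by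
    apply le_antisymm
    · intro z hz
      have hzC : z ∈ (N ⊓ Subgroup.center G) ⊔ H := by
        rw [← part4]; exact Subgroup.center_le_centralizer (N : Set G) hz
      have hzm : z ∈ (((N ⊓ Subgroup.center G : Subgroup G)) : Set G) * (H : Set G) := by
        rw [← Subgroup.mul_normal (N ⊓ Subgroup.center G) H]; exact hzC
      obtain ⟨c, hc, h, hh, hz_eq⟩ := Set.mem_mul.mp hzm
      have hhZ : h ∈ Subgroup.center G := by
        have : h = c⁻¹ * z := by rw [← hz_eq]; group
        rw [this]
        exact mul_mem ((Subgroup.center G).inv_mem hc.2) hz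
      rw [← hz_eq]
      exact mul_mem (Subgroup.mem_sup_left hc)
        (Subgroup.mem_sup_right (Subgroup.mem_inf.mpr ⟨hh, hhZ⟩))
    · exact sup_le inf_le_right inf_le_right
  exact ⟨part1 N' hNH hN'N, part2, part3, part4, part5, part6⟩
end

section
/- Let G be a group, A a finite cyclic subgroup of the center of G, and (H,N) a special pair in G. Let N' be a subgroup with A ≤ N' ≤ N (note N' is normal in G since [N',G] ⊆ A ≤ N'), and suppose there exists a genuine character χ of N', i.e. a homomorphism χ : N' → ℂˣ whose restriction to A is injective. Then the stabilizer G_χ = {g ∈ G : χ(g x g⁻¹) = χ(x) for all x ∈ N'} equals the centralizer Z_G(N'); in particular N' is abelian. Moreover, letting ψ denote the restriction of χ to N'∩Z(G), the G-orbit {χ^g : g ∈ G} (where χ^g(x) = χ(g x g⁻¹)) consists precisely of all characters of N' whose restriction to N'∩Z(G) equals ψ. -/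
open scoped commutatorElement
/-- Duality for finite commutative groups over `ℂˣ`. -/
lemma aux_dual_equiv_stmt10 (M : Type*) [CommGroup M] [Finite M] :
    Nonempty ((M →* ℂˣ) ≃* M) := by
  have h : Monoid.exponent M ≠ 0 := Monoid.exponent_ne_zero_of_finite
  haveI : NeZero ((Monoid.exponent M : ℂ)) := ⟨Nat.cast_ne_zero.mpr h⟩
  exact CommGroup.monoidHom_mulEquiv_of_hasEnoughRootsOfUnity M ℂ

/-- For a special pair `(H, N)` in `G` and a subgroup `N'` with `A ≤ N' ≤ N`
(so `N'` is normal in `G`), if `χ` is a genuine character of `N'`, then the stabilizer `G_χ`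
of `χ` under conjugation equals `Z_G(N')` (in particular `N'` is abelian), and the `G`-orbit
of `χ` consists precisely of the characters of `N'` agreeing with `χ` on `N' ∩ Z(G)`. -/
theorem stmt_10 {G : Type*} [Group G] (A H N : Subgroup G)
    (hA : A ≤ Subgroup.center G) (hcyc : IsCyclic A) (hfin : Finite A)
    (hsp : IsSpecialPair A H N)
    (N' : Subgroup G) (hAN' : A ≤ N') (hN'N : N' ≤ N) (hN'normal : N'.Normal)
    (χ : N' →* ℂˣ)
    (hgen : Function.Injective fun a : A => χ ⟨(a : G), hAN' a.2⟩) :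
    (∀ g : G,
      ((∀ (x : G) (hx : x ∈ N'),
          χ ⟨g * x * g⁻¹, hN'normal.conj_mem x hx g⟩ = χ ⟨x, hx⟩) ↔
        g ∈ Subgroup.centralizer (N' : Set G))) ∧
    (∀ x y : N', x * y = y * x) ∧
    (∀ θ : N' →* ℂˣ,
      ((∃ g : G, ∀ (x : G) (hx : x ∈ N'),
          θ ⟨x, hx⟩ = χ ⟨g * x * g⁻¹, hN'normal.conj_mem x hx g⟩) ↔
        (∀ (x : G) (hx : x ∈ N'), x ∈ Subgroup.center G → θ ⟨x, hx⟩ = χ ⟨x, hx⟩))) := by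
  classical
  -- commutators of elements of `N'` with anything lie in `A ≤ N'`
  have memA' : ∀ (x g : G), x ∈ N' → ⁅x, g⁆ ∈ A := fun x g hx => hsp.comm_mem x (hN'N hx) g
  have memA : ∀ (x g : G), x ∈ N' → ⁅x, g⁆ ∈ N' := fun x g hx => hAN' (memA' x g hx)
  -- genuineness: `χ` kills only the identity in `A`
  have hχ1 : ∀ (a : G) (ha : a ∈ A), χ ⟨a, hAN' ha⟩ = 1 → a = 1 := by
    intro a ha h1
    have h2 : (fun a : A => χ ⟨(a : G), hAN' a.2⟩) ⟨a, ha⟩ =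
        (fun a : A => χ ⟨(a : G), hAN' a.2⟩) 1 := by
      show χ ⟨a, _⟩ = χ ⟨((1 : A) : G), _⟩
      have h3 : (⟨((1 : A) : G), hAN' (1 : A).2⟩ : N') = 1 := rfl
      rw [h1, h3, map_one]
    exact congrArg (fun z : A => (z : G)) (hgen h2)
  -- conjugation formula
  have hχconj : ∀ (g x : G) (hx : x ∈ N'),
      χ ⟨g * x * g⁻¹, hN'normal.conj_mem x hx g⟩ =
        (χ ⟨⁅x, g⁆, memA x g hx⟩)⁻¹ * χ ⟨x, hx⟩ := by
    intro g x hx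
    have he : (⟨g * x * g⁻¹, hN'normal.conj_mem x hx g⟩ : N') =
        (⟨⁅x, g⁆, memA x g hx⟩)⁻¹ * ⟨x, hx⟩ := by
      apply Subtype.ext
      push_cast
      rw [commutatorElement_def]
      group
    rw [he, map_mul, map_inv]
  -- Part 1: the stabilizer of `χ` is the centralizer of `N'`
  have part1 : ∀ g : G,
      ((∀ (x : G) (hx : x ∈ N'),
          χ ⟨g * x * g⁻¹, hN'normal.conj_mem x hx g⟩ = χ ⟨x, hx⟩) ↔
        g ∈ Subgroup.centralizer (N' : Set G)) := by
    intro g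
    constructor
    · intro h
      rw [Subgroup.mem_centralizer_iff]
      intro x hx
      have h1 := h x hx
      rw [hχconj g x hx] at h1
      have h2 : (χ ⟨⁅x, g⁆, memA x g hx⟩)⁻¹ = 1 :=
        mul_right_cancel (h1.trans (one_mul (χ ⟨x, hx⟩)).symm)
      have h3 : ⁅x, g⁆ = 1 := hχ1 _ (memA' x g hx) (inv_eq_one.mp h2)
      exact commutatorElement_eq_one_iff_mul_comm.mp h3
    · intro hg x hx
      have h1 : x * g = g * x := Subgroup.mem_centralizer_iff.mp hg x hx
      have h2 : g * x * g⁻¹ = x := by rw [← h1]; group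
      exact congrArg χ (Subtype.ext h2)
  -- Part 2: `N'` is abelian
  have part2 : ∀ x y : N', x * y = y * x := by
    intro x y
    have hm : ⁅(x : G), (y : G)⁆ ∈ A := memA' x y x.2
    have hc : χ ⟨⁅(x : G), (y : G)⁆, hAN' hm⟩ = 1 := by
      have he : (⟨⁅(x : G), (y : G)⁆, hAN' hm⟩ : N') = x * y * x⁻¹ * y⁻¹ := by
        apply Subtype.ext; push_cast; rw [commutatorElement_def]
      rw [he, map_mul, map_mul, map_mul, map_inv, map_inv, mul_comm (χ x) (χ y)]
      group
    have h1 : ⁅(x : G), (y : G)⁆ = 1 := hχ1 _ hm hc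
    apply Subtype.ext
    push_cast
    exact commutatorElement_eq_one_iff_mul_comm.mp h1
  refine ⟨part1, part2, ?_⟩
  -- Part 3
  intro θ
  constructor
  · -- easy direction: members of the orbit agree with χ on the center
    rintro ⟨g, hg⟩ x hx hxc
    have h2 : g * x * g⁻¹ = x := by
      rw [Subgroup.mem_center_iff.mp hxc g]; group
    rw [hg x hx]
    exact congrArg χ (Subtype.ext h2)
  · -- hard direction
    intro hθ
    -- elements of A are central
    have hAc : ∀ a ∈ A, ∀ w : G, a * w = w * a := fun a ha w =>
      (Subgroup.mem_center_iff.mp (hA ha) w).symm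
    -- bimultiplicativity of commutators
    have hcml : ∀ (x y g : G), x ∈ N' → y ∈ N' → ⁅x * y, g⁆ = ⁅x, g⁆ * ⁅y, g⁆ := by
      intro x y g hx hy
      have h1 : ⁅x * y, g⁆ = x * ⁅y, g⁆ * x⁻¹ * ⁅x, g⁆ := by
        simp only [commutatorElement_def]; group
      rw [h1, ← hAc _ (memA' y g hy) x]
      rw [mul_assoc ⁅y, g⁆ x x⁻¹, mul_inv_cancel, mul_one, ← hAc _ (memA' y g hy) ⁅x, g⁆]
    have hcmr : ∀ (x g h : G), x ∈ N' → ⁅x, g * h⁆ = ⁅x, g⁆ * ⁅x, h⁆ := by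
      intro x g h hx
      have h1 : ⁅x, g * h⁆ = ⁅x, g⁆ * (g * ⁅x, h⁆ * g⁻¹) := by
        simp only [commutatorElement_def]; group
      rw [h1, ← hAc _ (memA' x h hx) g]
      group
    set Z : Subgroup G := Subgroup.centralizer (N' : Set G) with hZdef
    -- Z has finite index, since it contains H
    have hHZ : H ≤ Z := by
      intro h hh
      rw [hZdef, Subgroup.mem_centralizer_iff]
      intro n hn
      exact (hsp.commute n (hN'N hn) h hh).eq
    haveI := hsp.finiteIndex
    haveI hZfin : Z.FiniteIndex := Subgroup.finiteIndex_of_le hHZ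
    -- the character Φ g : N' →* ℂˣ, x ↦ χ ⁅x, g⁆
    let Φ : G →* (N' →* ℂˣ) :=
      { toFun := fun g =>
          { toFun := fun x => χ ⟨⁅(x : G), g⁆, memA x g x.2⟩
            map_one' := by
              show χ ⟨⁅((1 : N') : G), g⁆, memA _ g (1 : N').2⟩ = 1
              have h1 : ⁅((1 : N') : G), g⁆ = 1 := by
                rw [OneMemClass.coe_one, commutatorElement_def]; group
              have h2 : (⟨⁅((1 : N') : G), g⁆, memA _ g (1 : N').2⟩ : N') = 1 :=
                Subtype.ext h1
              rw [h2, map_one]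
            map_mul' := by
              intro x y
              have h1 : ⁅((x * y : N') : G), g⁆ = ⁅(x : G), g⁆ * ⁅(y : G), g⁆ := by
                rw [Subgroup.coe_mul]; exact hcml _ _ g x.2 y.2
              have h2 : (⟨⁅((x * y : N') : G), g⁆, memA _ g (x * y).2⟩ : N') =
                  ⟨⁅(x : G), g⁆, memA _ g x.2⟩ * ⟨⁅(y : G), g⁆, memA _ g y.2⟩ :=
                Subtype.ext h1
              show χ ⟨⁅((x * y : N') : G), g⁆, memA _ g (x * y).2⟩ =
                χ ⟨⁅(x : G), g⁆, memA _ g x.2⟩ * χ ⟨⁅(y : G), g⁆, memA _ g y.2⟩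
              rw [h2, map_mul] }
        map_one' := by
          refine MonoidHom.ext fun x => ?_
          have h1 : ⁅(x : G), (1 : G)⁆ = 1 := by rw [commutatorElement_def]; group
          have h2 : (⟨⁅(x : G), (1 : G)⁆, memA _ 1 x.2⟩ : N') = 1 := Subtype.ext h1
          show χ ⟨⁅(x : G), (1 : G)⁆, memA _ 1 x.2⟩ = 1
          rw [h2, map_one]
        map_mul' := by
          intro g h
          refine MonoidHom.ext fun x => ?_
          show χ ⟨⁅(x : G), g * h⁆, memA _ (g * h) x.2⟩ =
            χ ⟨⁅(x : G), g⁆, memA _ g x.2⟩ * χ ⟨⁅(x : G), h⁆, memA _ h x.2⟩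
          have h2 : (⟨⁅(x : G), g * h⁆, memA _ (g * h) x.2⟩ : N') =
              ⟨⁅(x : G), g⁆, memA _ g x.2⟩ * ⟨⁅(x : G), h⁆, memA _ h x.2⟩ :=
            Subtype.ext (hcmr _ g h x.2)
          rw [h2, map_mul] }
    have Φapp : ∀ (g : G) (x : N'), Φ g x = χ ⟨⁅(x : G), g⁆, memA x g x.2⟩ := fun _ _ => rfl
    -- kernel of Φ is Z
    have hkerΦ : ∀ g : G, Φ g = 1 ↔ g ∈ Z := by
      intro g
      constructor
      · intro h
        rw [hZdef, Subgroup.mem_centralizer_iff]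
        intro x hx
        have h1 : Φ g ⟨x, hx⟩ = 1 := by rw [h]; rfl
        rw [Φapp] at h1
        have h2 : ⁅x, g⁆ = 1 := hχ1 _ (memA' x g hx) h1
        exact commutatorElement_eq_one_iff_mul_comm.mp h2
      · intro hg
        refine MonoidHom.ext fun x => ?_
        have h1 : (x : G) * g = g * (x : G) := Subgroup.mem_centralizer_iff.mp hg x x.2
        have h2 : ⁅(x : G), g⁆ = 1 := commutatorElement_eq_one_iff_mul_comm.mpr h1
        show χ ⟨⁅(x : G), g⁆, memA _ g x.2⟩ = 1
        have h3 : (⟨⁅(x : G), g⁆, memA _ g x.2⟩ : N') = 1 := Subtype.ext h2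
        rw [h3, map_one]
    -- the subgroup K of N' of central elements
    set K : Subgroup N' := (Subgroup.center G).comap N'.subtype with hKdef
    have memK : ∀ x : N', x ∈ K ↔ (x : G) ∈ Subgroup.center G := fun x => Iff.rfl
    haveI hKnorm : K.Normal := by
      constructor
      intro k hk n
      rw [memK] at hk ⊢
      have h1 : ((n * k * n⁻¹ : N') : G) = (k : G) := by
        push_cast
        rw [Subgroup.mem_center_iff.mp hk (n : G)]
        group
      rw [h1]
      exact hk
    haveI hZnorm : Z.Normal := by
      constructor
      intro z hz g
      rw [hZdef, Subgroup.mem_centralizer_iff] at hz ⊢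
      intro x hx
      have hx' : g⁻¹ * x * g ∈ N' := by
        have := hN'normal.conj_mem x hx g⁻¹
        simpa using this
      have h1 := hz _ hx'
      calc x * (g * z * g⁻¹) = g * ((g⁻¹ * x * g) * z) * g⁻¹ := by group
        _ = g * (z * (g⁻¹ * x * g)) * g⁻¹ := by rw [h1]
        _ = (g * z * g⁻¹) * x := by group
    -- ΦQ : G →* (N' ⧸ K →* ℂˣ)
    have hkillK : ∀ g : G, K ≤ (Φ g).ker := by
      intro g x hx
      rw [MonoidHom.mem_ker, Φapp]
      have h2 : ⁅(x : G), g⁆ = 1 := commutatorElement_eq_one_iff_mul_comm.mpr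
        (Subgroup.mem_center_iff.mp ((memK x).mp hx) g).symm
      have h3 : (⟨⁅(x : G), g⁆, memA _ g x.2⟩ : N') = 1 := Subtype.ext h2
      rw [h3, map_one]
    let ΦQ : G →* ((N' ⧸ K) →* ℂˣ) :=
      { toFun := fun g => QuotientGroup.lift K (Φ g) (hkillK g)
        map_one' := by
          refine MonoidHom.ext fun q => ?_
          induction q using QuotientGroup.induction_on with
          | H x =>
            rw [QuotientGroup.lift_mk]
            rw [map_one]
            rfl
        map_mul' := by
          intro g h
          refine MonoidHom.ext fun q => ?_
          induction q using QuotientGroup.induction_on with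
          | H x =>
            show QuotientGroup.lift K (Φ (g * h)) (hkillK _) x = _
            rw [QuotientGroup.lift_mk, map_mul]
            rfl }
    have ΦQapp : ∀ (g : G) (x : N'), ΦQ g ((x : N' ⧸ K)) = Φ g x := fun g x => rfl
    have hkerΦQ : ∀ g : G, ΦQ g = 1 ↔ g ∈ Z := by
      intro g
      rw [← hkerΦ g]
      constructor
      · intro h
        refine MonoidHom.ext fun x => ?_
        have := congrArg (fun f : (N' ⧸ K) →* ℂˣ => f (x : N' ⧸ K)) h
        simpa [ΦQapp] using this
      · intro h
        refine MonoidHom.ext fun q => ?_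
        induction q using QuotientGroup.induction_on with
        | H x => rw [ΦQapp, h]; rfl
    have hZker : Z ≤ ΦQ.ker := fun g hg => (hkerΦQ g).mpr hg
    let f1 : (G ⧸ Z) →* ((N' ⧸ K) →* ℂˣ) := QuotientGroup.lift Z ΦQ hZker
    have f1app : ∀ g : G, f1 ((g : G ⧸ Z)) = ΦQ g := fun g => rfl
    have f1inj : Function.Injective f1 := by
      rw [injective_iff_map_eq_one]
      intro p hp
      induction p using QuotientGroup.induction_on with
      | H g =>
        rw [f1app] at hp
        exact (QuotientGroup.eq_one_iff g).mpr ((hkerΦQ g).mp hp)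
    -- commutativity of the two quotients
    letI : CommGroup (G ⧸ Z) :=
      { (inferInstance : Group (G ⧸ Z)) with
        mul_comm := fun a b => f1inj (by rw [map_mul, map_mul]; exact mul_comm (f1 a) (f1 b)) }
    letI : CommGroup (N' ⧸ K) :=
      { (inferInstance : Group (N' ⧸ K)) with
        mul_comm := fun a b => by
          induction a using QuotientGroup.induction_on with
          | H x =>
            induction b using QuotientGroup.induction_on with
            | H y => rw [← QuotientGroup.mk_mul, ← QuotientGroup.mk_mul, part2] }
    -- Ψ0 : N' →* ((G ⧸ Z) →* ℂˣ)
    let ψ : N' → (G →* ℂˣ) := fun x =>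
      { toFun := fun g => χ ⟨⁅(x : G), g⁆, memA _ g x.2⟩
        map_one' := by
          have h1 : ⁅(x : G), (1 : G)⁆ = 1 := by rw [commutatorElement_def]; group
          have h2 : (⟨⁅(x : G), (1 : G)⁆, memA _ 1 x.2⟩ : N') = 1 := Subtype.ext h1
          show χ ⟨⁅(x : G), (1 : G)⁆, memA _ 1 x.2⟩ = 1
          rw [h2, map_one]
        map_mul' := by
          intro g h
          show χ ⟨⁅(x : G), g * h⁆, memA _ (g * h) x.2⟩ = _
          have h2 : (⟨⁅(x : G), g * h⁆, memA _ (g * h) x.2⟩ : N') =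
              ⟨⁅(x : G), g⁆, memA _ g x.2⟩ * ⟨⁅(x : G), h⁆, memA _ h x.2⟩ :=
            Subtype.ext (hcmr _ g h x.2)
          rw [h2, map_mul] }
    have hψkill : ∀ x : N', Z ≤ (ψ x).ker := by
      intro x z hz
      rw [MonoidHom.mem_ker]
      show χ ⟨⁅(x : G), z⁆, memA _ z x.2⟩ = 1
      have h1 : (x : G) * z = z * (x : G) := Subgroup.mem_centralizer_iff.mp hz x x.2
      have h2 : (⟨⁅(x : G), z⁆, memA _ z x.2⟩ : N') = 1 :=
        Subtype.ext (commutatorElement_eq_one_iff_mul_comm.mpr h1)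
      rw [h2, map_one]
    let Ψ0 : N' →* ((G ⧸ Z) →* ℂˣ) :=
      { toFun := fun x => QuotientGroup.lift Z (ψ x) (hψkill x)
        map_one' := by
          refine MonoidHom.ext fun p => ?_
          induction p using QuotientGroup.induction_on with
          | H g =>
            show ψ 1 g = 1
            have h1 : ⁅((1 : N') : G), g⁆ = 1 := by
              rw [OneMemClass.coe_one, commutatorElement_def]; group
            have h2 : (⟨⁅((1 : N') : G), g⁆, memA _ g (1 : N').2⟩ : N') = 1 := Subtype.ext h1
            show χ ⟨⁅((1 : N') : G), g⁆, memA _ g (1 : N').2⟩ = 1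
            rw [h2, map_one]
        map_mul' := by
          intro x y
          refine MonoidHom.ext fun p => ?_
          induction p using QuotientGroup.induction_on with
          | H g =>
            show ψ (x * y) g = ψ x g * ψ y g
            have h1 : ⁅((x * y : N') : G), g⁆ = ⁅(x : G), g⁆ * ⁅(y : G), g⁆ := by
              rw [Subgroup.coe_mul]; exact hcml _ _ g x.2 y.2
            have h2 : (⟨⁅((x * y : N') : G), g⁆, memA _ g (x * y).2⟩ : N') =
                ⟨⁅(x : G), g⁆, memA _ g x.2⟩ * ⟨⁅(y : G), g⁆, memA _ g y.2⟩ :=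
              Subtype.ext h1
            show χ ⟨⁅((x * y : N') : G), g⁆, memA _ g (x * y).2⟩ = _
            rw [h2, map_mul]
            rfl }
    have Ψ0app : ∀ (x : N') (g : G), Ψ0 x ((g : G ⧸ Z)) = χ ⟨⁅(x : G), g⁆, memA _ g x.2⟩ :=
      fun x g => rfl
    have hkerΨ0 : ∀ x : N', Ψ0 x = 1 ↔ x ∈ K := by
      intro x
      constructor
      · intro h
        rw [memK, Subgroup.mem_center_iff]
        intro g
        have h1 := congrArg (fun f : (G ⧸ Z) →* ℂˣ => f ((g : G ⧸ Z))) h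
        simp only [Ψ0app] at h1
        have h2 : ⁅(x : G), g⁆ = 1 := hχ1 _ (memA' x g x.2) h1
        exact (commutatorElement_eq_one_iff_mul_comm.mp h2).symm
      · intro hx
        refine MonoidHom.ext fun p => ?_
        induction p using QuotientGroup.induction_on with
        | H g =>
          rw [Ψ0app]
          have h2 : (⟨⁅(x : G), g⁆, memA _ g x.2⟩ : N') = 1 :=
            Subtype.ext (commutatorElement_eq_one_iff_mul_comm.mpr
              (Subgroup.mem_center_iff.mp ((memK x).mp hx) g).symm)
          rw [h2, map_one]
          rfl
    have hKker : K ≤ Ψ0.ker := fun x hx => (hkerΨ0 x).mpr hx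
    let f2 : (N' ⧸ K) →* ((G ⧸ Z) →* ℂˣ) := QuotientGroup.lift K Ψ0 hKker
    have f2inj : Function.Injective f2 := by
      rw [injective_iff_map_eq_one]
      intro q hq
      induction q using QuotientGroup.induction_on with
      | H x =>
        have : Ψ0 x = 1 := hq
        exact (QuotientGroup.eq_one_iff x).mpr ((hkerΨ0 x).mp this)
    -- counting
    haveI : Finite (G ⧸ Z) := Z.finite_quotient_of_finiteIndex
    obtain ⟨e1⟩ := aux_dual_equiv_stmt10 (G ⧸ Z)
    haveI : Finite ((G ⧸ Z) →* ℂˣ) := Finite.of_equiv _ e1.toEquiv.symm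
    haveI : Finite (N' ⧸ K) := Finite.of_injective f2 f2inj
    obtain ⟨e2⟩ := aux_dual_equiv_stmt10 (N' ⧸ K)
    haveI : Finite ((N' ⧸ K) →* ℂˣ) := Finite.of_equiv _ e2.toEquiv.symm
    have c1 : Nat.card (G ⧸ Z) ≤ Nat.card ((N' ⧸ K) →* ℂˣ) :=
      Nat.card_le_card_of_injective f1 f1inj
    have c2 : Nat.card ((N' ⧸ K) →* ℂˣ) = Nat.card (N' ⧸ K) := Nat.card_congr e2.toEquiv
    have c3 : Nat.card (N' ⧸ K) ≤ Nat.card ((G ⧸ Z) →* ℂˣ) :=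
      Nat.card_le_card_of_injective f2 f2inj
    have c4 : Nat.card ((G ⧸ Z) →* ℂˣ) = Nat.card (G ⧸ Z) := Nat.card_congr e1.toEquiv
    have hcard : Nat.card (G ⧸ Z) = Nat.card ((N' ⧸ K) →* ℂˣ) := le_antisymm c1 (by omega)
    have f1surj : Function.Surjective f1 :=
      ((Nat.bijective_iff_injective_and_card f1).mpr ⟨f1inj, hcard⟩).2
    -- the quotient character to realize
    let δ : N' →* ℂˣ := χ * θ⁻¹
    have δapp : ∀ x : N', δ x = χ x * (θ x)⁻¹ := fun x => rfl
    have hδkill : K ≤ δ.ker := by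
      intro x hx
      rw [MonoidHom.mem_ker, δapp]
      have h1 : θ x = χ x := by
        have := hθ (x : G) x.2 ((memK x).mp hx)
        simpa using this
      rw [h1, mul_inv_cancel]
    let δQ : (N' ⧸ K) →* ℂˣ := QuotientGroup.lift K δ hδkill
    obtain ⟨p, hp⟩ := f1surj δQ
    obtain ⟨g, rfl⟩ := QuotientGroup.mk_surjective p
    refine ⟨g, ?_⟩
    intro x hx
    have h1 : Φ g ⟨x, hx⟩ = δ ⟨x, hx⟩ := by
      have h2 : ΦQ g = δQ := by rw [← f1app]; exact hp
      have h3 := congrArg (fun f : (N' ⧸ K) →* ℂˣ => f (((⟨x, hx⟩ : N') : N' ⧸ K))) h2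
      exact h3
    have h4 : χ ⟨⁅x, g⁆, memA x g hx⟩ = χ ⟨x, hx⟩ * (θ ⟨x, hx⟩)⁻¹ := h1
    rw [hχconj g x hx, h4]
    group
end

section
/- Let G be a group, A a finite cyclic subgroup of the center of G, and (H,N) a special pair in G. Let ψ be a genuine character of H∩N (a homomorphism H∩N → ℂˣ injective on A; note H∩N is central in H). Let (τ,V) be a representation of H on a nonzero complex vector space which is locally-ψ on H∩N. For g ∈ G let τ^g denote the representation of H given by τ^g(h) = τ(g h g⁻¹). Then {g ∈ G : τ^g is isomorphic to τ as a representation of H} = HN. -/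
open scoped Pointwise
open scoped commutatorElement


/-- If a vector is killed by powers of `f - a • 1` and `f - b • 1` with `a ≠ b`, it is zero. -/
lemma aux_kill {V : Type*} [AddCommGroup V] [Module ℂ V] (f : Module.End ℂ V)
    {a b : ℂ} (hab : a ≠ b) {k m : ℕ} {w : V}
    (h1 : ((f - a • 1) ^ k) w = 0) (h2 : ((f - b • 1) ^ m) w = 0) : w = 0 := by
  have hd := Module.End.disjoint_genEigenspace f hab (k : ℕ∞) (m : ℕ∞)
  have hw1 : w ∈ f.genEigenspace a k := Module.End.mem_genEigenspace_nat.mpr h1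
  have hw2 : w ∈ f.genEigenspace b m := Module.End.mem_genEigenspace_nat.mpr h2
  exact (Submodule.mem_bot ℂ).mp (hd.le_bot ⟨hw1, hw2⟩)

/-- Intertwiners propagate to powers of translated operators. -/
lemma aux_comp_pow {V : Type*} [AddCommGroup V] [Module ℂ V] (T p q : Module.End ℂ V)
    (h : T * p = q * T) (k : ℕ) : T * p ^ k = q ^ k * T := by
  induction k with
  | zero => simp
  | succ k ih => rw [pow_succ, pow_succ, ← mul_assoc, ih, mul_assoc, h, ← mul_assoc]

/-- For a special pair `(H, N)` in `G`, a genuine character `ψ` of `H ∩ N` and a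
nonzero representation `(τ, V)` of `H` that is locally-`ψ` on `H ∩ N`, the stabilizer
`{g ∈ G : τ^g ≃ τ}` equals `HN`. -/
theorem stmt_11 {G : Type*} [Group G] (A H N : Subgroup G)
    (hA : A ≤ Subgroup.center G) (hcyc : IsCyclic A) (hfin : Finite A)
    (hsp : IsSpecialPair A H N)
    (ψ : ↥(H ⊓ N) →* ℂˣ)
    (hgen : Function.Injective fun a : A =>
      ψ ⟨(a : G), Subgroup.mem_inf.mpr ⟨hsp.A_le_H a.2, hsp.A_le_N a.2⟩⟩)
    (V : Type*) [AddCommGroup V] [Module ℂ V] [Nontrivial V]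
    (τ : Representation ℂ ↥H V)
    (hloc : ∀ v : V, ∃ m : ℕ, ∀ (a : G) (ha : a ∈ H ⊓ N),
      (((τ ⟨a, (Subgroup.mem_inf.mp ha).1⟩ : Module.End ℂ V) -
          ((ψ ⟨a, ha⟩ : ℂˣ) : ℂ) • 1) ^ m) v = 0) :
    {g : G | ∃ T : V ≃ₗ[ℂ] V, ∀ (h : G) (hh : h ∈ H) (v : V),
        T (τ ⟨h, hh⟩ v) = τ ⟨g * h * g⁻¹, hsp.normal.conj_mem h hh g⟩ (T v)} =
      ((H ⊔ N : Subgroup G) : Set G) := by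
  have key : ∀ (x y : ↥H) (v : V), τ x (τ y v) = τ (x * y) v := by
    intro x y v; rw [map_mul]; rfl
  ext g
  simp only [Set.mem_setOf_eq, SetLike.mem_coe]
  constructor
  · rintro ⟨T, hT⟩
    have : g ∈ Subgroup.centralizer ((H ⊓ N : Subgroup G) : Set G) := by
      rw [Subgroup.mem_centralizer_iff]
      intro a ha
      have haHN : a ∈ H ⊓ N := ha
      -- the commutator `c = g a g⁻¹ a⁻¹` lies in `A`
      have hcA : g * a * g⁻¹ * a⁻¹ ∈ A := by
        have h1 := A.inv_mem (hsp.comm_mem a haHN.2 g)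
        have h2 : (⁅a, g⁆)⁻¹ = g * a * g⁻¹ * a⁻¹ := by group
        rwa [h2] at h1
      set c := g * a * g⁻¹ * a⁻¹ with hc
      have hc_inf : c ∈ H ⊓ N :=
        Subgroup.mem_inf.mpr ⟨hsp.A_le_H hcA, hsp.A_le_N hcA⟩
      have hconj : g * a * g⁻¹ = c * a := by rw [hc]; group
      have hconj_mem : g * a * g⁻¹ ∈ H ⊓ N := by rw [hconj]; exact mul_mem hc_inf haHN
      -- show `ψ c = 1`
      have hpsi : ψ ⟨c, hc_inf⟩ = 1 := by
        by_contra hne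
        obtain ⟨v, hv⟩ := exists_ne (0 : V)
        set w := T v with hw
        have hwne : w ≠ 0 := by
          simpa [hw] using (T.map_ne_zero_iff).mpr hv
        set lam : ℂ := ((ψ ⟨a, haHN⟩ : ℂˣ) : ℂ) with hlam
        set mu : ℂ := ((ψ ⟨g * a * g⁻¹, hconj_mem⟩ : ℂˣ) : ℂ) with hmu
        have hmu_eq : mu = ((ψ ⟨c, hc_inf⟩ : ℂˣ) : ℂ) * lam := by
          have hsub : (⟨g * a * g⁻¹, hconj_mem⟩ : ↥(H ⊓ N)) = ⟨c, hc_inf⟩ * ⟨a, haHN⟩ :=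
            Subtype.ext hconj
          rw [hmu, hsub, map_mul, Units.val_mul, hlam]
        have hlamne : lam ≠ mu := by
          intro hcon
          apply hne
          have hlam0 : lam ≠ 0 := Units.ne_zero _
          have hval : ((ψ ⟨c, hc_inf⟩ : ℂˣ) : ℂ) = 1 := by
            have h' := hcon.trans hmu_eq
            have := mul_right_cancel₀ hlam0 (by rw [← h', one_mul] : (1 : ℂ) * lam = ((ψ ⟨c, hc_inf⟩ : ℂˣ) : ℂ) * lam)
            exact this.symm
          exact Units.ext (by simpa using hval)
        set f : Module.End ℂ V := τ ⟨g * a * g⁻¹, (Subgroup.mem_inf.mp hconj_mem).1⟩ with hf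
        -- annihilation of `w` by a power of `f - mu • 1`
        obtain ⟨m, hm⟩ := hloc w
        have h2 : ((f - mu • 1) ^ m) w = 0 := hm (g * a * g⁻¹) hconj_mem
        -- annihilation of `w` by a power of `f - lam • 1`, via the intertwiner
        obtain ⟨k, hk⟩ := hloc v
        have h1v : ((τ ⟨a, (Subgroup.mem_inf.mp haHN).1⟩ - lam • 1) ^ k) v = 0 :=
          hk a haHN
        have hcomm : (T : V →ₗ[ℂ] V) * (τ ⟨a, (Subgroup.mem_inf.mp haHN).1⟩ - lam • 1)
            = (f - lam • 1) * (T : V →ₗ[ℂ] V) := by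
          ext u
          have := hT a (Subgroup.mem_inf.mp haHN).1 u
          simp only [Module.End.mul_apply, LinearMap.sub_apply, LinearMap.smul_apply,
            Module.End.one_apply, map_sub, map_smul, LinearEquiv.coe_coe]
          rw [this]
        have h1 : ((f - lam • 1) ^ k) w = 0 := by
          have hTk := aux_comp_pow (T : V →ₗ[ℂ] V) _ _ hcomm k
          have happ := LinearMap.congr_fun hTk v
          simp only [Module.End.mul_apply] at happ
          have : ((f - lam • 1) ^ k) ((T : V →ₗ[ℂ] V) v) = 0 := by
            rw [← happ, h1v, map_zero]
          exact this
        exact hwne (aux_kill f hlamne h1 h2)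
      -- genuineness gives `c = 1`
      have hc1 : c = 1 := by
        have h1A : (1 : G) ∈ A := A.one_mem
        have heq : (⟨c, hcA⟩ : A) = ⟨1, h1A⟩ := hgen (by
          show ψ ⟨c, hc_inf⟩ = ψ 1
          rw [hpsi, map_one])
        exact congrArg Subtype.val heq
      have hga : g * a * g⁻¹ = a := by rw [hconj, hc1, one_mul]
      conv_lhs => rw [← hga]
      group
    rw [hsp.centralizer_inf_eq] at this
    rwa [sup_comm] at this
  · intro hg
    haveI := hsp.normal
    have hg' : g ∈ (↑(H ⊔ N) : Set G) := hg
    rw [Subgroup.normal_mul H N] at hg'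
    obtain ⟨h₀, hh₀, n, hn, rfl⟩ := hg'
    refine ⟨LinearEquiv.ofLinear (τ ⟨h₀, hh₀⟩) (τ ⟨h₀⁻¹, inv_mem hh₀⟩) ?_ ?_, ?_⟩
    · rw [← Module.End.mul_eq_comp, ← map_mul]
      have : (⟨h₀, hh₀⟩ : ↥H) * ⟨h₀⁻¹, inv_mem hh₀⟩ = 1 := Subtype.ext (by simp)
      rw [this, map_one]; rfl
    · rw [← Module.End.mul_eq_comp, ← map_mul]
      have : (⟨h₀⁻¹, inv_mem hh₀⟩ : ↥H) * ⟨h₀, hh₀⟩ = 1 := Subtype.ext (by simp)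
      rw [this, map_one]; rfl
    · intro h hh v
      simp only [LinearEquiv.ofLinear_apply]
      rw [key, key]
      have hxy : (⟨h₀, hh₀⟩ : ↥H) * ⟨h, hh⟩
          = ⟨h₀ * n * h * (h₀ * n)⁻¹, hsp.normal.conj_mem h hh (h₀ * n)⟩ * ⟨h₀, hh₀⟩ := by
        apply Subtype.ext
        show h₀ * h = h₀ * n * h * (h₀ * n)⁻¹ * h₀
        have hnh : n * h * n⁻¹ = h := by rw [hsp.commute n hn h hh]; group
        rw [show h₀ * n * h * (h₀ * n)⁻¹ * h₀ = h₀ * (n * h * n⁻¹) by group, hnh]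
      rw [hxy]
end

section
/- Let D be an abelian group and let A₁, A₂, B₁, B₂ be subgroups of D such that A₂ ≤ A₁, B₂ ≤ B₁, D = A₁B₂ = A₂B₁, and A₁∩B₂ = A₂∩B₁. Let ψ₂ : A₂ → ℂˣ and χ₂ : B₂ → ℂˣ be characters that agree on A₂∩B₂. Let X be the set of characters of A₁ extending ψ₂, Y the set of characters of B₁ extending χ₂, and Z the set of pairs (ψ₁,χ₁) ∈ X × Y such that ψ₁ and χ₁ agree on A₁∩B₁. Then: (1) the map θ ↦ (θ|_{A₁}, θ|_{B₁}) is a bijection from the set of characters of D that extend both ψ₂ and χ₂ onto Z; (2) Z is the graph of a bijection between X and Y, i.e. for every ψ₁ ∈ X there is exactly one χ₁ ∈ Y with (ψ₁,χ₁) ∈ Z, and for every χ₁ ∈ Y there is exactly one ψ₁ ∈ X with (ψ₁,χ₁) ∈ Z. -/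
/-!
Two subgroups `H`, `K` with `H ⊔ K = ⊤` in an abelian group present it as the quotient of
`H × K` by the antidiagonal copy of `H ⊓ K`, so a pair of consistent characters of `H` and `K`
glues to exactly one character of the whole group. Given `ψ₁ ∈ X`, the hypothesis
`A₁ ⊓ B₂ = A₂ ⊓ B₁` makes `ψ₁` consistent with `χ₂`; gluing them over `D = A₁B₂` and restricting
to `B₁` gives the partner of `ψ₁`, and any other partner glues with `ψ₁` over `D = A₁B₁` to a
character extending `ψ₁` and `χ₂`, hence to the same one. The case of `χ₁ ∈ Y` is symmetric.
-/

namespace MonoidHom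

section Group

variable {G M : Type*} [Group G] [Monoid M]

def Consistent {H K : Subgroup G} (φ : H →* M) (η : K →* M) : Prop :=
  ∀ (x : G) (hH : x ∈ H) (hK : x ∈ K), φ ⟨x, hH⟩ = η ⟨x, hK⟩

theorem consistent_comm {H K : Subgroup G} {φ : H →* M} {η : K →* M} :
    Consistent φ η ↔ Consistent η φ :=
  ⟨fun h x hK hH => (h x hH hK).symm, fun h x hH hK => (h x hK hH).symm⟩

theorem Consistent.of_restrict {H₁ H₂ K : Subgroup G} (hH : H₂ ≤ H₁) (hle : H₁ ⊓ K ≤ H₂)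
    {φ₁ : H₁ →* M} {φ₂ : H₂ →* M} {η : K →* M}
    (hφ : ∀ (x : G) (h : x ∈ H₂), φ₁ ⟨x, hH h⟩ = φ₂ ⟨x, h⟩) (hc : Consistent φ₂ η) :
    Consistent φ₁ η := fun x h₁ hK =>
  (hφ x (hle ⟨h₁, hK⟩)).trans (hc x _ hK)

theorem ext_of_sup_eq_top {H K : Subgroup G} (hHK : H ⊔ K = ⊤) {θ θ' : G →* M}
    (hH : ∀ x ∈ H, θ x = θ' x) (hK : ∀ x ∈ K, θ x = θ' x) : θ = θ' :=
  eq_of_eqOn_top fun _ hx =>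
    (sup_le (show H ≤ θ.eqLocus θ' from hH) hK : H ⊔ K ≤ θ.eqLocus θ') (hHK ▸ hx)

theorem restrict_pair_injective {H K : Subgroup G} (hHK : H ⊔ K = ⊤) :
    Function.Injective fun θ : G →* M => (θ.comp H.subtype, θ.comp K.subtype) :=
  fun _ _ h => ext_of_sup_eq_top hHK
    (fun x hx => DFunLike.congr_fun (congrArg Prod.fst h) ⟨x, hx⟩)
    (fun x hx => DFunLike.congr_fun (congrArg Prod.snd h) ⟨x, hx⟩)

end Group

section CommGroup

variable {G M : Type*} [CommGroup G] [CommGroup M]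

theorem coprod_subtype_surjective {H K : Subgroup G} (hHK : H ⊔ K = ⊤) :
    Function.Surjective (H.subtype.coprod K.subtype) := fun x => by
  obtain ⟨a, ha, b, hb, rfl⟩ := Subgroup.mem_sup.mp (hHK ▸ Subgroup.mem_top x : x ∈ H ⊔ K)
  exact ⟨(⟨a, ha⟩, ⟨b, hb⟩), rfl⟩

theorem Consistent.exists_extension {H K : Subgroup G} (hHK : H ⊔ K = ⊤) {φ : H →* M}
    {η : K →* M} (hc : Consistent φ η) :
    ∃ θ : G →* M, (∀ (x : G) (h : x ∈ H), θ x = φ ⟨x, h⟩) ∧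
      (∀ (x : G) (h : x ∈ K), θ x = η ⟨x, h⟩) := by
  set μ := H.subtype.coprod K.subtype
  have hker : μ.ker ≤ (φ.coprod η).ker := by
    rintro ⟨a, b⟩ hab
    have hba : (a : G) = (b : G)⁻¹ := eq_inv_of_mul_eq_one_left hab
    have : φ a = η b⁻¹ :=
      (hc a a.2 (by rw [hba]; exact inv_mem b.2)).trans (congrArg η (Subtype.ext hba))
    simp [mem_ker, this]
  set θ := μ.liftOfSurjective (coprod_subtype_surjective hHK) ⟨_, hker⟩
  have hθ : ∀ p, θ (μ p) = φ p.1 * η p.2 := μ.liftOfRightInverse_comp_apply _ _ ⟨_, hker⟩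
  exact ⟨θ, fun x h => by simpa [μ] using hθ (⟨x, h⟩, 1),
    fun x h => by simpa [μ] using hθ (1, ⟨x, h⟩)⟩

theorem existsUnique_consistent_extension {H K₁ K₂ : Subgroup G} (hK : K₂ ≤ K₁)
    (hHK : H ⊔ K₂ = ⊤) {φ : H →* M} {η : K₂ →* M} (hc : Consistent φ η) :
    ∃! η₁ : K₁ →* M, (∀ (x : G) (h : x ∈ K₂), η₁ ⟨x, hK h⟩ = η ⟨x, h⟩) ∧ Consistent φ η₁ := by
  have hHK₁ : H ⊔ K₁ = ⊤ := top_unique (hHK ▸ sup_le_sup_left hK H)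
  obtain ⟨θ, hθH, hθK⟩ := hc.exists_extension hHK
  refine ⟨θ.comp K₁.subtype, ⟨fun x h => hθK x h, fun x hH _ => (hθH x hH).symm⟩, ?_⟩
  rintro η₁ ⟨hη₁, hc₁⟩
  obtain ⟨θ₁, hθ₁H, hθ₁K⟩ := hc₁.exists_extension hHK₁
  have hθ₁ : θ₁ = θ := ext_of_sup_eq_top hHK
    (fun x h => (hθ₁H x h).trans (hθH x h).symm)
    (fun x h => ((hθ₁K x (hK h)).trans (hη₁ x h)).trans (hθK x h).symm)
  exact MonoidHom.ext fun y => (hθ₁K y y.2).symm.trans (DFunLike.congr_fun hθ₁ (y : G))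

end CommGroup

end MonoidHom

open MonoidHom in
/-- Let `D` be an abelian group with subgroups `A₂ ≤ A₁`, `B₂ ≤ B₁` satisfying
`D = A₁B₂ = A₂B₁` and `A₁ ∩ B₂ = A₂ ∩ B₁`, and let `ψ₂`, `χ₂` be consistent characters of
`A₂`, `B₂`. Then (1) restriction `θ ↦ (θ|_{A₁}, θ|_{B₁})` is a bijection from the set of
characters of `D` extending both `ψ₂` and `χ₂` onto the set `Z` of consistent pairs of
extensions, and (2) `Z` is the graph of a bijection between the set `X` of extensions of
`ψ₂` to `A₁` and the set `Y` of extensions of `χ₂` to `B₁`. -/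
theorem stmt_12 (D : Type*) [CommGroup D] (A₁ A₂ B₁ B₂ : Subgroup D)
    (hA : A₂ ≤ A₁) (hB : B₂ ≤ B₁)
    (hD1 : A₁ ⊔ B₂ = ⊤) (hD2 : A₂ ⊔ B₁ = ⊤)
    (hint : A₁ ⊓ B₂ = A₂ ⊓ B₁)
    (ψ₂ : A₂ →* ℂˣ) (χ₂ : B₂ →* ℂˣ)
    (hcons : ∀ (x : D) (h1 : x ∈ A₂) (h2 : x ∈ B₂), ψ₂ ⟨x, h1⟩ = χ₂ ⟨x, h2⟩) :
    Set.BijOn (fun θ : D →* ℂˣ => (θ.comp A₁.subtype, θ.comp B₁.subtype))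
      {θ : D →* ℂˣ | (∀ (x : D) (h : x ∈ A₂), θ x = ψ₂ ⟨x, h⟩) ∧
        (∀ (x : D) (h : x ∈ B₂), θ x = χ₂ ⟨x, h⟩)}
      {p : (A₁ →* ℂˣ) × (B₁ →* ℂˣ) |
        (∀ (x : D) (h : x ∈ A₂), p.1 ⟨x, hA h⟩ = ψ₂ ⟨x, h⟩) ∧
        (∀ (x : D) (h : x ∈ B₂), p.2 ⟨x, hB h⟩ = χ₂ ⟨x, h⟩) ∧
        (∀ (x : D) (h1 : x ∈ A₁) (h2 : x ∈ B₁), p.1 ⟨x, h1⟩ = p.2 ⟨x, h2⟩)} ∧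
    (∀ ψ₁ : A₁ →* ℂˣ, (∀ (x : D) (h : x ∈ A₂), ψ₁ ⟨x, hA h⟩ = ψ₂ ⟨x, h⟩) →
      ∃! χ₁ : B₁ →* ℂˣ, (∀ (x : D) (h : x ∈ B₂), χ₁ ⟨x, hB h⟩ = χ₂ ⟨x, h⟩) ∧
        (∀ (x : D) (h1 : x ∈ A₁) (h2 : x ∈ B₁), ψ₁ ⟨x, h1⟩ = χ₁ ⟨x, h2⟩)) ∧
    (∀ χ₁ : B₁ →* ℂˣ, (∀ (x : D) (h : x ∈ B₂), χ₁ ⟨x, hB h⟩ = χ₂ ⟨x, h⟩) →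
      ∃! ψ₁ : A₁ →* ℂˣ, (∀ (x : D) (h : x ∈ A₂), ψ₁ ⟨x, hA h⟩ = ψ₂ ⟨x, h⟩) ∧
        (∀ (x : D) (h1 : x ∈ A₁) (h2 : x ∈ B₁), ψ₁ ⟨x, h1⟩ = χ₁ ⟨x, h2⟩)) := by
  have hA₁B₁ : A₁ ⊔ B₁ = ⊤ := top_unique (hD1 ▸ sup_le_sup_left hB A₁)
  refine ⟨⟨?_, (restrict_pair_injective hA₁B₁).injOn, ?_⟩, ?_, ?_⟩
  · rintro θ ⟨hθA, hθB⟩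
    exact ⟨hθA, hθB, fun _ _ _ => rfl⟩
  · rintro ⟨ψ₁, χ₁⟩ ⟨hψ₁, hχ₁, hc⟩
    obtain ⟨θ, hθA, hθB⟩ := Consistent.exists_extension hA₁B₁ hc
    exact ⟨θ, ⟨fun x h => (hθA x (hA h)).trans (hψ₁ x h),
        fun x h => (hθB x (hB h)).trans (hχ₁ x h)⟩,
      Prod.ext (MonoidHom.ext fun a => hθA a a.2) (MonoidHom.ext fun b => hθB b b.2)⟩
  · intro ψ₁ hψ₁
    exact existsUnique_consistent_extension hB hD1 (Consistent.of_restrict hA (hint.le.trans inf_le_left) hψ₁ hcons)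
  · intro χ₁ hχ₁
    have hle : B₁ ⊓ A₂ ≤ B₂ := (inf_comm B₁ A₂ ▸ hint.ge).trans inf_le_right
    refine (existsUnique_congr fun ψ₁ => and_congr_right' consistent_comm).mp ?_
    exact existsUnique_consistent_extension hA (sup_comm A₂ B₁ ▸ hD2)
      ((consistent_comm.mp hcons).of_restrict hB hle hχ₁)
end
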